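/- arXiv:quant-ph/0304153 — 10 statements merged into one kernel-verified Lean document; each statement's English description precedes it below -/
import Mathlib

section
/- Let c_0, c_1 ∈ C^{2^n} satisfy condition (II): (Z_1Z_2···Z_n) c_0 = c_0 and (Z_1Z_2···Z_n) c_1 = −c_1. Then ⟨e_p c_0, e_q c_1⟩ = 0 for every pair of operators e_p, e_q taken from the set {I} ∪ {Z_rZ_s : r ≠ s} ∪ {X_rX_s : r ≠ s} ∪ {Y_rY_s : r ≠ s}. -/
open scoped BigOperators

noncomputable section

/-- The state space `ℂ^{2^n}`: complex coefficient functions on binary `n`-tuples,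
with the standard orthonormal basis given by the `ket`s of the tuples. -/
abbrev QVec (n : ℕ) := (Fin n → Bool) → ℂ

/-- Flip bit `r` of a binary tuple, i.e. `v ↦ v + e_r` (addition mod 2). -/
def bflip {n : ℕ} (r : Fin n) (v : Fin n → Bool) : Fin n → Bool :=
  Function.update v r (!(v r))

/-- Pauli `X_r`: on basis kets, `X_r |v⟩ = |v + e_r⟩`. -/
def PX {n : ℕ} (r : Fin n) (ψ : QVec n) : QVec n := fun v => ψ (bflip r v)

/-- Pauli `Z_r`: on basis kets, `Z_r |v⟩ = (-1)^{v_r} |v⟩`. -/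
def PZ {n : ℕ} (r : Fin n) (ψ : QVec n) : QVec n :=
  fun v => (if v r then (-1 : ℂ) else 1) * ψ v

/-- Pauli `Y_r`: on basis kets, `Y_r |v⟩ = i (-1)^{v_r} |v + e_r⟩`. -/
def PY {n : ℕ} (r : Fin n) (ψ : QVec n) : QVec n :=
  fun v => Complex.I * (if v r then (1 : ℂ) else -1) * ψ (bflip r v)

/-- The inner product on `ℂ^{2^n}`, conjugate-linear in the first argument. -/
def qinner {n : ℕ} (ψ φ : QVec n) : ℂ :=
  ∑ v : Fin n → Bool, (starRingEnd ℂ) (ψ v) * φ v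

/-- Hamming weight of a binary tuple. -/
def wt {n : ℕ} (v : Fin n → Bool) : ℕ := (Finset.univ.filter (fun i => v i = true)).card

/-- Basis ket `|v⟩`. -/
def ket {n : ℕ} (v : Fin n → Bool) : QVec n := fun w => if w = v then 1 else 0

/-- `W_k = Σ_{wt(v) = k} |v⟩`. -/
def Wvec (n : ℕ) (k : ℕ) : QVec n := fun v => if wt v = k then 1 else 0

/-- The Pauli operators indexed by `Fin 3`: `0 ↦ X`, `1 ↦ Y`, `2 ↦ Z`. -/
def pauli {n : ℕ} (t : Fin 3) (r : Fin n) : QVec n → QVec n :=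
  if t = 0 then PX r else if t = 1 then PY r else PZ r

/-- The Knill–Laflamme error-correction condition: the code `(c 0, c 1)` corrects
the (indexed) error set `E` iff `⟨e_p c_i, e_q c_j⟩ = δ_{ij} d_{pq}` for some matrix `d`. -/
def Corrects {n : ℕ} {ι : Type} (E : ι → (QVec n → QVec n)) (c : Fin 2 → QVec n) : Prop :=
  ∃ d : ι → ι → ℂ, ∀ p q : ι, ∀ i j : Fin 2,
    qinner (E p (c i)) (E q (c j)) = if i = j then d p q else 0

/-- The composition `Z_1 Z_2 ⋯ Z_n` of all the `Z_r`:
it multiplies the coefficient at `v` by `∏_r (-1)^{v_r}`. -/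
def PZall (n : ℕ) (ψ : QVec n) : QVec n :=
  fun v => (∏ r : Fin n, (if v r then (-1 : ℂ) else 1)) * ψ v

/-- The error set `{I} ∪ {Z_r Z_s : r ≠ s} ∪ {X_r X_s : r ≠ s} ∪ {Y_r Y_s : r ≠ s}`. -/
def doubleErrSet (n : ℕ) : Set (QVec n → QVec n) :=
  {id} ∪ {f | ∃ r s : Fin n, r ≠ s ∧ f = fun ψ => PZ r (PZ s ψ)}
    ∪ {f | ∃ r s : Fin n, r ≠ s ∧ f = fun ψ => PX r (PX s ψ)}
    ∪ {f | ∃ r s : Fin n, r ≠ s ∧ f = fun ψ => PY r (PY s ψ)}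


/-- Parity sign `∏_r (-1)^{v_r}`. -/
def sgn {n : ℕ} (v : Fin n → Bool) : ℂ := ∏ r : Fin n, (if v r then (-1 : ℂ) else 1)

lemma sgn_sq {n : ℕ} (v : Fin n → Bool) : sgn v * sgn v = 1 := by
  unfold sgn
  rw [← Finset.prod_mul_distrib]
  apply Finset.prod_eq_one
  intro i _
  by_cases h : v i <;> simp [h]

lemma conj_sgn {n : ℕ} (v : Fin n → Bool) : (starRingEnd ℂ) (sgn v) = sgn v := by
  unfold sgn
  rw [map_prod]
  apply Finset.prod_congr rfl
  intro i _
  by_cases h : v i <;> simp [h]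

lemma sgn_flip {n : ℕ} (r : Fin n) (v : Fin n → Bool) : sgn (bflip r v) = - sgn v := by
  unfold sgn bflip
  have h1 : (∏ j : Fin n, (if Function.update v r (!(v r)) j then (-1 : ℂ) else 1))
      = ∏ j : Fin n, (Function.update (fun j => if v j then (-1:ℂ) else 1) r
          (if !(v r) then (-1:ℂ) else 1)) j := by
    apply Finset.prod_congr rfl
    intro j _
    by_cases h : j = r
    · subst h; simp
    · simp [Function.update_of_ne h]
  rw [h1, Finset.prod_update_of_mem (Finset.mem_univ r)]
  rw [← Finset.mul_prod_erase Finset.univ _ (Finset.mem_univ r)]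
  by_cases h : v r <;> simp [h, Finset.erase_eq]

lemma sgn_flip2 {n : ℕ} (r s : Fin n) (v : Fin n → Bool) :
    sgn (bflip s (bflip r v)) = sgn v := by
  rw [sgn_flip, sgn_flip, neg_neg]

lemma bflip_ne {n : ℕ} {r s : Fin n} (h : r ≠ s) (v : Fin n → Bool) :
    bflip r v s = v s := by
  unfold bflip
  exact Function.update_of_ne (Ne.symm h) _ _

/-- Each error in the set commutes with `PZall` (pointwise form). -/
lemma err_comm {n : ℕ} {e : QVec n → QVec n} (he : e ∈ doubleErrSet n)
    (ψ : QVec n) (v : Fin n → Bool) : e (PZall n ψ) v = sgn v * e ψ v := by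
  rcases he with ((he | he) | he) | he
  · rw [Set.mem_singleton_iff] at he
    subst he; rfl
  · obtain ⟨r, s, hrs, rfl⟩ := he
    simp only [PZ, PZall, sgn]
    ring
  · obtain ⟨r, s, hrs, rfl⟩ := he
    simp only [PX, PZall]
    rw [← sgn_flip2 r s v]
    rfl
  · obtain ⟨r, s, hrs, rfl⟩ := he
    simp only [PY, PZall]
    rw [show (∏ r_1 : Fin n, if bflip s (bflip r v) r_1 = true then (-1:ℂ) else 1) = sgn v
      from sgn_flip2 r s v]
    ring

/-- Each error in the set respects negation. -/
lemma err_neg {n : ℕ} {e : QVec n → QVec n} (he : e ∈ doubleErrSet n)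
    (ψ : QVec n) (v : Fin n → Bool) : e (-ψ) v = -(e ψ v) := by
  rcases he with ((he | he) | he) | he
  · rw [Set.mem_singleton_iff] at he
    subst he; rfl
  · obtain ⟨r, s, hrs, rfl⟩ := he
    simp only [PZ, Pi.neg_apply]; ring
  · obtain ⟨r, s, hrs, rfl⟩ := he
    simp only [PX, Pi.neg_apply]
  · obtain ⟨r, s, hrs, rfl⟩ := he
    simp only [PY, Pi.neg_apply]; ring

lemma key_inner {n : ℕ} (a b : QVec n)
    (ha : ∀ v, a v = sgn v * a v) (hb : ∀ v, b v = -(sgn v * b v)) :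
    qinner a b = 0 := by
  unfold qinner
  apply Finset.sum_eq_zero
  intro v _
  have h : (starRingEnd ℂ) (a v) * b v = -((starRingEnd ℂ) (a v) * b v) := by
    calc (starRingEnd ℂ) (a v) * b v
        = (starRingEnd ℂ) (sgn v * a v) * (-(sgn v * b v)) := by rw [← ha v, ← hb v]
      _ = -((sgn v * sgn v) * ((starRingEnd ℂ) (a v) * b v)) := by
          rw [map_mul, conj_sgn]; ring
      _ = -((starRingEnd ℂ) (a v) * b v) := by rw [sgn_sq]; ring
  linear_combination (1/2 : ℂ) * h

/-- Theorem 4: under condition (II) (`Z_1⋯Z_n c₀ = c₀` and `Z_1⋯Z_n c₁ = -c₁`),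
`⟨e_p c₀, e_q c₁⟩ = 0` for any pair of errors from
`{I} ∪ {Z_r Z_s} ∪ {X_r X_s} ∪ {Y_r Y_s}`. -/
theorem stmt5 (n : ℕ) (c0 c1 : QVec n)
    (h0 : PZall n c0 = c0) (h1 : PZall n c1 = -c1) :
    ∀ ep ∈ doubleErrSet n, ∀ eq ∈ doubleErrSet n, qinner (ep c0) (eq c1) = 0 := by
  intro ep hep eq heq
  apply key_inner
  · intro v
    have := err_comm hep c0 v
    rw [h0] at this
    exact this
  · intro v
    have h := err_comm heq c1 v
    rw [h1] at h
    have h2 := err_neg heq c1 v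
    rw [h2] at h
    linear_combination -h
end
end

section
/- Let c_0, c_1 ∈ C^{2^n} satisfy condition (I): (X_1X_2···X_n) c_0 = c_1. Then for any choices f, g ∈ {X, Y, Z} (possibly equal) and any indices r, s, q, t, one has ⟨f_r f_s c_0, g_q g_t c_0⟩ = ⟨f_r f_s c_1, g_q g_t c_1⟩. -/
open scoped BigOperators

noncomputable section

/-- The composition `X_1 X_2 ⋯ X_n` of all the `X_r`: it flips every bit. -/
def PXall (n : ℕ) (ψ : QVec n) : QVec n := fun v => ψ (fun i => !(v i))


lemma bflip_neg {n : ℕ} (r : Fin n) (v : Fin n → Bool) :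
    (fun i => !(bflip r v i)) = bflip r (fun i => !(v i)) := by
  funext i
  by_cases h : i = r
  · subst h; simp [bflip]
  · simp [bflip, Function.update, h]

lemma pauli_pxall {n : ℕ} (f : Fin 3) (r : Fin n) (ψ : QVec n) :
    pauli f r (PXall n ψ)
      = fun v => (if f = 0 then (1:ℂ) else -1) * PXall n (pauli f r ψ) v := by
  fin_cases f
  · funext v
    show PX r (PXall n ψ) v = 1 * PXall n (PX r ψ) v
    simp only [PX, PXall, one_mul]
    rw [show (fun i => !(bflip r v i)) = bflip r (fun i => !(v i)) from bflip_neg r v]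
  · funext v
    show PY r (PXall n ψ) v = -1 * PXall n (PY r ψ) v
    simp only [PY, PXall]
    rw [show (fun i => !(bflip r v i)) = bflip r (fun i => !(v i)) from bflip_neg r v]
    by_cases h : v r = true <;> simp [h] <;> ring
  · funext v
    show PZ r (PXall n ψ) v = -1 * PXall n (PZ r ψ) v
    simp only [PZ, PXall]
    by_cases h : v r = true <;> simp [h]

lemma pauli_smul {n : ℕ} (f : Fin 3) (rr : Fin n) (c : ℂ) (φ : QVec n) :
    pauli f rr (fun v => c * φ v) = fun v => c * pauli f rr φ v := by
  fin_cases f <;> funext v <;> simp [pauli, PX, PY, PZ] <;> ring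

lemma pauli2_pxall {n : ℕ} (f : Fin 3) (r s : Fin n) (ψ : QVec n) :
    pauli f r (pauli f s (PXall n ψ))
      = PXall n (pauli f r (pauli f s ψ)) := by
  rw [pauli_pxall f s, pauli_smul, pauli_pxall f r]
  funext v
  simp only [PXall]
  by_cases h : f = 0 <;> simp [h]

lemma qinner_pxall {n : ℕ} (a b : QVec n) :
    qinner (PXall n a) (PXall n b) = qinner a b := by
  unfold qinner PXall
  exact Fintype.sum_equiv
    ⟨fun v => fun i => !(v i), fun v => fun i => !(v i),
      fun v => by funext i; simp, fun v => by funext i; simp⟩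
    _ _ (fun v => rfl)

/-- Theorem 5: under condition (I) (`X_1⋯X_n c₀ = c₁`), inner products of two-bit
errors of the forms `f_r f_s` and `g_q g_t` (`f, g ∈ {X, Y, Z}`) against `c₀`
agree with those against `c₁`. -/
theorem stmt6 (n : ℕ) (c0 c1 : QVec n) (hI : PXall n c0 = c1)
    (f g : Fin 3) (r s q t : Fin n) :
    qinner (pauli f r (pauli f s c0)) (pauli g q (pauli g t c0))
      = qinner (pauli f r (pauli f s c1)) (pauli g q (pauli g t c1)) := by
  subst hI
  rw [pauli2_pxall, pauli2_pxall, qinner_pxall]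
end
end

section
/- Let n be odd, let a_0, a_2, ..., a_{n−1} be complex numbers, and let c_0 = Σ_{j=0}^{(n−1)/2} a_{2j} W_{2j}, c_1 = Σ_{j=0}^{(n−1)/2} a_{n−2j−1} W_{2j+1} (a code satisfying conditions (I) and (II)). Define C_0 = H^{⊗n} c_0 + H^{⊗n} c_1 and C_1 = H^{⊗n} c_0 − H^{⊗n} c_1, where H^{⊗n}|v⟩ = 2^{−n/2} Σ_w (−1)^{v·w} |w⟩. Then (c_0, c_1) corrects the error set {I} ∪ {X_k, Y_k, Z_k : 1 ≤ k ≤ n} ∪ {Z_rZ_s : 1 ≤ r < s ≤ n} if and only if (C_0, C_1) corrects the error set {I} ∪ {X_k, Y_k, Z_k : 1 ≤ k ≤ n} ∪ {X_rX_s : 1 ≤ r < s ≤ n}. -/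
open scoped BigOperators

noncomputable section

/-- `v · w = Σ_r v_r w_r` (number of positions where both bits are 1). -/
def dotB {n : ℕ} (v w : Fin n → Bool) : ℕ :=
  (Finset.univ.filter (fun i => v i = true ∧ w i = true)).card

/-- The `n`-fold Hadamard transform: `H^{⊗n} |v⟩ = 2^{-n/2} Σ_w (-1)^{v·w} |w⟩`. -/
def Had (n : ℕ) (ψ : QVec n) : QVec n :=
  fun w => (((Real.sqrt 2 ^ n)⁻¹ : ℝ) : ℂ) * ∑ v : Fin n → Bool, (-1 : ℂ) ^ (dotB v w) * ψ v

/-- The error set `{I} ∪ {X_k, Y_k, Z_k : 1 ≤ k ≤ n} ∪ {Z_r Z_s : 1 ≤ r < s ≤ n}`. -/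
def errFamZZ (n : ℕ) :
    (Option (Fin 3 × Fin n) ⊕ {p : Fin n × Fin n // p.1 < p.2}) → (QVec n → QVec n) :=
  fun e => match e with
  | Sum.inl none => id
  | Sum.inl (some (t, r)) => pauli t r
  | Sum.inr p => fun ψ => PZ p.1.1 (PZ p.1.2 ψ)

/-- The error set `{I} ∪ {X_k, Y_k, Z_k : 1 ≤ k ≤ n} ∪ {X_r X_s : 1 ≤ r < s ≤ n}`. -/
def errFamXX (n : ℕ) :
    (Option (Fin 3 × Fin n) ⊕ {p : Fin n × Fin n // p.1 < p.2}) → (QVec n → QVec n) :=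
  fun e => match e with
  | Sum.inl none => id
  | Sum.inl (some (t, r)) => pauli t r
  | Sum.inr p => fun ψ => PX p.1.1 (PX p.1.2 ψ)

-- basic lemmas
lemma neg_one_pow_dotB {n : ℕ} (v w : Fin n → Bool) :
    (-1 : ℂ) ^ (dotB v w) = ∏ i : Fin n, (if v i = true ∧ w i = true then (-1 : ℂ) else 1) := by
  rw [Finset.prod_ite, Finset.prod_const, Finset.prod_const, one_pow, mul_one, dotB]

lemma sum_char {n : ℕ} (v u : Fin n → Bool) :
    ∑ w : Fin n → Bool, (-1 : ℂ) ^ (dotB v w) * (-1 : ℂ) ^ (dotB u w)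
      = if v = u then (2 : ℂ) ^ n else 0 := by
  have h : ∀ w, (-1 : ℂ) ^ (dotB v w) * (-1 : ℂ) ^ (dotB u w)
      = ∏ i : Fin n, ((if v i = true ∧ w i = true then (-1 : ℂ) else 1)
        * (if u i = true ∧ w i = true then (-1 : ℂ) else 1)) := by
    intro w
    rw [neg_one_pow_dotB, neg_one_pow_dotB, Finset.prod_mul_distrib]
  simp only [h]
  have h2 : ∑ w : Fin n → Bool, ∏ i : Fin n,
      ((if v i = true ∧ w i = true then (-1 : ℂ) else 1)
        * (if u i = true ∧ w i = true then (-1 : ℂ) else 1))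
      = ∏ i : Fin n, ∑ b : Bool,
      ((if v i = true ∧ b = true then (-1 : ℂ) else 1)
        * (if u i = true ∧ b = true then (-1 : ℂ) else 1)) := by
    rw [Finset.prod_univ_sum]
    rw [← Fintype.piFinset_univ]
  rw [h2]
  have h3 : ∀ i : Fin n, (∑ b : Bool,
      ((if v i = true ∧ b = true then (-1 : ℂ) else 1)
        * (if u i = true ∧ b = true then (-1 : ℂ) else 1)))
      = if v i = u i then 2 else 0 := by
    intro i
    cases hv : v i <;> cases hu : u i <;> simp [Fintype.sum_bool] <;> norm_num
  simp only [h3]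
  by_cases hvu : v = u
  · simp [hvu]
  · rw [if_neg hvu]
    obtain ⟨i, hi⟩ : ∃ i, v i ≠ u i := by
      by_contra hcon
      push_neg at hcon
      exact hvu (funext hcon)
    exact Finset.prod_eq_zero (Finset.mem_univ i) (if_neg hi)

lemma qinner_had {n : ℕ} (ψ φ : QVec n) : qinner (Had n ψ) (Had n φ) = qinner ψ φ := by
  have hc : ((((Real.sqrt 2 ^ n)⁻¹ : ℝ) : ℂ)) * (((Real.sqrt 2 ^ n)⁻¹ : ℝ) : ℂ)
      = ((2 : ℂ) ^ n)⁻¹ := by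
    rw [← Complex.ofReal_mul, ← mul_inv, ← mul_pow, Real.mul_self_sqrt (by norm_num)]
    push_cast; ring
  unfold qinner Had
  have key : ∀ w : Fin n → Bool,
      (starRingEnd ℂ) ((((Real.sqrt 2 ^ n)⁻¹ : ℝ) : ℂ) * ∑ v : Fin n → Bool, (-1 : ℂ) ^ (dotB v w) * ψ v)
        * ((((Real.sqrt 2 ^ n)⁻¹ : ℝ) : ℂ) * ∑ u : Fin n → Bool, (-1 : ℂ) ^ (dotB u w) * φ u)
      = ((2 : ℂ) ^ n)⁻¹ * ∑ v : Fin n → Bool, ∑ u : Fin n → Bool,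
          ((starRingEnd ℂ) (ψ v) * φ u) * ((-1 : ℂ) ^ (dotB v w) * (-1 : ℂ) ^ (dotB u w)) := by
    intro w
    simp only [map_mul, map_sum, map_pow, map_neg, map_one, Complex.conj_ofReal]
    rw [show ∀ a b c d : ℂ, (a * b) * (c * d) = (a * c) * (b * d) from fun a b c d => by ring]
    rw [hc, Finset.sum_mul_sum]
    congr 1
    apply Finset.sum_congr rfl
    intro v _
    apply Finset.sum_congr rfl
    intro u _
    ring
  simp only [key]
  rw [← Finset.mul_sum, Finset.sum_comm]
  have inner : ∀ v : Fin n → Bool,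
      ∑ w : Fin n → Bool, ∑ u : Fin n → Bool,
        ((starRingEnd ℂ) (ψ v) * φ u) * ((-1:ℂ) ^ dotB v w * (-1:ℂ) ^ dotB u w)
      = 2 ^ n * ((starRingEnd ℂ) (ψ v) * φ v) := by
    intro v
    rw [Finset.sum_comm]
    have hw : ∀ u : Fin n → Bool,
        ∑ w : Fin n → Bool, ((starRingEnd ℂ) (ψ v) * φ u) * ((-1:ℂ) ^ dotB v w * (-1:ℂ) ^ dotB u w)
        = if v = u then ((starRingEnd ℂ) (ψ v) * φ u) * (2:ℂ)^n else 0 := by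
      intro u
      rw [← Finset.mul_sum, sum_char]
      split_ifs <;> simp
    simp only [hw]
    rw [Finset.sum_ite_eq]
    simp [mul_comm]
  simp only [inner]
  rw [← Finset.mul_sum, ← mul_assoc, inv_mul_cancel₀ (pow_ne_zero n two_ne_zero), one_mul]

lemma bflip_invol {n : ℕ} (r : Fin n) : Function.Involutive (bflip r) := by
  intro v
  unfold bflip
  rw [Function.update_idem, Function.update_self, Bool.not_not, Function.update_eq_self]

lemma bflip_apply_self {n : ℕ} (r : Fin n) (v : Fin n → Bool) : bflip r v r = !(v r) :=
  Function.update_self r _ v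

lemma bflip_apply_ne {n : ℕ} (r i : Fin n) (v : Fin n → Bool) (h : i ≠ r) :
    bflip r v i = v i := Function.update_of_ne h _ v

lemma dot_flip_right {n : ℕ} (v w : Fin n → Bool) (r : Fin n) :
    (-1 : ℂ) ^ (dotB v (bflip r w)) = (if v r then (-1 : ℂ) else 1) * (-1 : ℂ) ^ (dotB v w) := by
  rw [neg_one_pow_dotB, neg_one_pow_dotB]
  rw [← Finset.prod_erase_mul _ _ (Finset.mem_univ r),
      ← Finset.prod_erase_mul _ _ (Finset.mem_univ r)]
  have hoff : ∀ i ∈ Finset.univ.erase r,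
      (if v i = true ∧ bflip r w i = true then (-1 : ℂ) else 1)
        = (if v i = true ∧ w i = true then (-1 : ℂ) else 1) := by
    intro i hi
    rw [bflip_apply_ne r i w (Finset.ne_of_mem_erase hi)]
  rw [Finset.prod_congr rfl hoff]
  rw [bflip_apply_self]
  cases hv : v r <;> cases hw : w r <;> simp <;> ring

lemma dotB_comm {n : ℕ} (v w : Fin n → Bool) : dotB v w = dotB w v := by
  unfold dotB
  congr 1
  apply Finset.filter_congr
  intro i _
  simp [and_comm]

lemma dot_flip_left {n : ℕ} (v w : Fin n → Bool) (r : Fin n) :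
    (-1 : ℂ) ^ (dotB (bflip r v) w) = (if w r then (-1 : ℂ) else 1) * (-1 : ℂ) ^ (dotB v w) := by
  rw [dotB_comm, dot_flip_right, dotB_comm]

lemma had_PZ {n : ℕ} (r : Fin n) (ψ : QVec n) : Had n (PZ r ψ) = PX r (Had n ψ) := by
  funext w
  unfold Had PX PZ
  congr 1
  apply Finset.sum_congr rfl
  intro v _
  rw [dot_flip_right]
  ring

lemma had_PX {n : ℕ} (r : Fin n) (ψ : QVec n) : Had n (PX r ψ) = PZ r (Had n ψ) := by
  funext w
  unfold Had PX PZ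
  have h1 : ∑ v : Fin n → Bool,
      ((if w r = true then (-1:ℂ) else 1) * ((-1:ℂ) ^ (dotB v w) * ψ (bflip r v)))
      = ∑ v : Fin n → Bool, (-1:ℂ) ^ (dotB v w) * ψ v := by
    rw [← Function.Bijective.sum_comp (bflip_invol r).bijective
      (fun v => (-1:ℂ) ^ (dotB v w) * ψ v)]
    apply Finset.sum_congr rfl
    intro v _
    rw [dot_flip_left]
    ring
  beta_reduce
  rw [← h1, ← Finset.mul_sum]
  cases hw : w r <;> simp <;> ring

lemma PY_eq {n : ℕ} (r : Fin n) (ψ : QVec n) :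
    PY r ψ = Complex.I • (PX r (PZ r ψ)) := by
  funext v
  unfold PY PX PZ
  simp only [Pi.smul_apply, smul_eq_mul, bflip_apply_self]
  cases hv : v r <;> simp <;> ring

lemma had_smul {n : ℕ} (a : ℂ) (ψ : QVec n) : Had n (a • ψ) = a • Had n ψ := by
  funext w
  unfold Had
  simp only [Pi.smul_apply, smul_eq_mul, Finset.mul_sum]
  apply Finset.sum_congr rfl
  intro v _
  ring

lemma PZ_PX_anti {n : ℕ} (r : Fin n) (ψ : QVec n) :
    PZ r (PX r ψ) = (-1 : ℂ) • PX r (PZ r ψ) := by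
  funext v
  unfold PX PZ
  simp only [Pi.smul_apply, smul_eq_mul, bflip_apply_self]
  cases hv : v r <;> simp

lemma had_PY {n : ℕ} (r : Fin n) (ψ : QVec n) :
    Had n (PY r ψ) = (-1 : ℂ) • PY r (Had n ψ) := by
  rw [PY_eq, had_smul, had_PX, had_PZ, PZ_PX_anti, smul_comm, ← PY_eq]

/-- The index swap X ↔ Z on single-qubit errors. -/
def swapT : Fin 3 → Fin 3 := ![2, 1, 0]

def swapE {n : ℕ} :
    (Option (Fin 3 × Fin n) ⊕ {p : Fin n × Fin n // p.1 < p.2}) →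
    (Option (Fin 3 × Fin n) ⊕ {p : Fin n × Fin n // p.1 < p.2}) :=
  fun e => match e with
  | Sum.inl none => Sum.inl none
  | Sum.inl (some (t, r)) => Sum.inl (some (swapT t, r))
  | Sum.inr p => Sum.inr p

def epsE {n : ℕ} :
    (Option (Fin 3 × Fin n) ⊕ {p : Fin n × Fin n // p.1 < p.2}) → ℂ :=
  fun e => match e with
  | Sum.inl (some (t, _)) => if t = 1 then -1 else 1
  | _ => 1

lemma swapT_invol (t : Fin 3) : swapT (swapT t) = t := by
  fin_cases t <;> decide

lemma swapE_invol {n : ℕ} (e : Option (Fin 3 × Fin n) ⊕ {p : Fin n × Fin n // p.1 < p.2}) :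
    swapE (swapE e) = e := by
  rcases e with (_ | ⟨t, r⟩) | p <;> simp [swapE, swapT_invol]

lemma epsE_sq {n : ℕ} (e : Option (Fin 3 × Fin n) ⊕ {p : Fin n × Fin n // p.1 < p.2}) :
    epsE e * epsE e = 1 := by
  rcases e with (_ | ⟨t, r⟩) | p <;> simp [epsE]
  split_ifs <;> norm_num

lemma epsE_conj {n : ℕ} (e : Option (Fin 3 × Fin n) ⊕ {p : Fin n × Fin n // p.1 < p.2}) :
    (starRingEnd ℂ) (epsE e) = epsE e := by
  rcases e with (_ | ⟨t, r⟩) | p <;> simp [epsE]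
  split_ifs <;> simp

/-- The master conjugation identity. -/
lemma master {n : ℕ} (e : Option (Fin 3 × Fin n) ⊕ {p : Fin n × Fin n // p.1 < p.2})
    (ψ : QVec n) :
    errFamXX n e (Had n ψ) = epsE e • Had n (errFamZZ n (swapE e) ψ) := by
  rcases e with (_ | ⟨t, r⟩) | p
  · simp [errFamXX, errFamZZ, swapE, epsE]
  · fin_cases t
    · show PX r (Had n ψ) = (1 : ℂ) • Had n (PZ r ψ)
      rw [had_PZ, one_smul]
    · show PY r (Had n ψ) = (-1 : ℂ) • Had n (PY r ψ)
      rw [had_PY, smul_smul]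
      norm_num
    · show PZ r (Had n ψ) = (1 : ℂ) • Had n (PX r ψ)
      rw [had_PX, one_smul]
  · show PX p.1.1 (PX p.1.2 (Had n ψ)) = (1 : ℂ) • Had n (PZ p.1.1 (PZ p.1.2 ψ))
    rw [had_PZ, had_PZ, one_smul]

lemma qinner_smul_left {n : ℕ} (a : ℂ) (ψ φ : QVec n) :
    qinner (a • ψ) φ = (starRingEnd ℂ) a * qinner ψ φ := by
  unfold qinner
  rw [Finset.mul_sum]
  apply Finset.sum_congr rfl
  intro v _
  simp only [Pi.smul_apply, smul_eq_mul, map_mul]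
  ring

lemma qinner_smul_right {n : ℕ} (a : ℂ) (ψ φ : QVec n) :
    qinner ψ (a • φ) = a * qinner ψ φ := by
  unfold qinner
  rw [Finset.mul_sum]
  apply Finset.sum_congr rfl
  intro v _
  simp only [Pi.smul_apply, smul_eq_mul]
  ring

lemma qinner_add_left {n : ℕ} (ψ φ χ : QVec n) :
    qinner (ψ + φ) χ = qinner ψ χ + qinner φ χ := by
  unfold qinner
  rw [← Finset.sum_add_distrib]
  apply Finset.sum_congr rfl
  intro v _
  simp only [Pi.add_apply, map_add]
  ring

lemma qinner_add_right {n : ℕ} (ψ φ χ : QVec n) :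
    qinner ψ (φ + χ) = qinner ψ φ + qinner ψ χ := by
  unfold qinner
  rw [← Finset.sum_add_distrib]
  apply Finset.sum_congr rfl
  intro v _
  simp only [Pi.add_apply]
  ring

lemma qinner_sub_left {n : ℕ} (ψ φ χ : QVec n) :
    qinner (ψ - φ) χ = qinner ψ χ - qinner φ χ := by
  unfold qinner
  rw [← Finset.sum_sub_distrib]
  apply Finset.sum_congr rfl
  intro v _
  simp only [Pi.sub_apply, map_sub]
  ring

lemma qinner_sub_right {n : ℕ} (ψ φ χ : QVec n) :
    qinner ψ (φ - χ) = qinner ψ φ - qinner ψ χ := by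
  unfold qinner
  rw [← Finset.sum_sub_distrib]
  apply Finset.sum_congr rfl
  intro v _
  simp only [Pi.sub_apply]
  ring

lemma PX_add {n : ℕ} (r : Fin n) (ψ φ : QVec n) : PX r (ψ + φ) = PX r ψ + PX r φ := by
  funext v; simp [PX]
lemma PZ_add {n : ℕ} (r : Fin n) (ψ φ : QVec n) : PZ r (ψ + φ) = PZ r ψ + PZ r φ := by
  funext v; simp only [Pi.add_apply, Pi.sub_apply, PZ]; split_ifs <;> ring
lemma PY_add {n : ℕ} (r : Fin n) (ψ φ : QVec n) : PY r (ψ + φ) = PY r ψ + PY r φ := by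
  funext v; simp only [Pi.add_apply, Pi.sub_apply, PY]; split_ifs <;> ring
lemma PX_sub {n : ℕ} (r : Fin n) (ψ φ : QVec n) : PX r (ψ - φ) = PX r ψ - PX r φ := by
  funext v; simp [PX]
lemma PZ_sub {n : ℕ} (r : Fin n) (ψ φ : QVec n) : PZ r (ψ - φ) = PZ r ψ - PZ r φ := by
  funext v; simp only [Pi.add_apply, Pi.sub_apply, PZ]; split_ifs <;> ring
lemma PY_sub {n : ℕ} (r : Fin n) (ψ φ : QVec n) : PY r (ψ - φ) = PY r ψ - PY r φ := by
  funext v; simp only [Pi.add_apply, Pi.sub_apply, PY]; split_ifs <;> ring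

lemma errZZ_add {n : ℕ} (e : Option (Fin 3 × Fin n) ⊕ {p : Fin n × Fin n // p.1 < p.2})
    (ψ φ : QVec n) : errFamZZ n e (ψ + φ) = errFamZZ n e ψ + errFamZZ n e φ := by
  rcases e with (_ | ⟨t, r⟩) | p
  · rfl
  · show pauli t r (ψ + φ) = pauli t r ψ + pauli t r φ
    unfold pauli
    split_ifs <;> simp [PX_add, PY_add, PZ_add]
  · show PZ p.1.1 (PZ p.1.2 (ψ + φ)) = PZ p.1.1 (PZ p.1.2 ψ) + PZ p.1.1 (PZ p.1.2 φ)
    rw [PZ_add, PZ_add]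

lemma errZZ_sub {n : ℕ} (e : Option (Fin 3 × Fin n) ⊕ {p : Fin n × Fin n // p.1 < p.2})
    (ψ φ : QVec n) : errFamZZ n e (ψ - φ) = errFamZZ n e ψ - errFamZZ n e φ := by
  rcases e with (_ | ⟨t, r⟩) | p
  · rfl
  · show pauli t r (ψ - φ) = pauli t r ψ - pauli t r φ
    unfold pauli
    split_ifs <;> simp [PX_sub, PY_sub, PZ_sub]
  · show PZ p.1.1 (PZ p.1.2 (ψ - φ)) = PZ p.1.1 (PZ p.1.2 ψ) - PZ p.1.1 (PZ p.1.2 φ)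
    rw [PZ_sub, PZ_sub]

lemma had_add {n : ℕ} (ψ φ : QVec n) : Had n (ψ + φ) = Had n ψ + Had n φ := by
  funext w
  unfold Had
  simp only [Pi.add_apply]
  rw [← mul_add, ← Finset.sum_add_distrib]
  congr 1
  apply Finset.sum_congr rfl
  intro v _
  ring

lemma had_sub {n : ℕ} (ψ φ : QVec n) : Had n (ψ - φ) = Had n ψ - Had n φ := by
  funext w
  unfold Had
  simp only [Pi.sub_apply]
  rw [← mul_sub, ← Finset.sum_sub_distrib]
  congr 1
  apply Finset.sum_congr rfl
  intro v _
  ring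

lemma stepB {n : ℕ} (b : Fin 2 → QVec n) :
    Corrects (errFamZZ n) b ↔ Corrects (errFamXX n) (fun i => Had n (b i)) := by
  constructor
  · rintro ⟨d, h⟩
    refine ⟨fun p q => epsE p * epsE q * d (swapE p) (swapE q), fun p q i j => ?_⟩
    simp only
    rw [master, master, qinner_smul_left, qinner_smul_right, epsE_conj, qinner_had, h]
    by_cases hij : i = j
    · simp [hij]; ring
    · simp [hij]
  · rintro ⟨d, h⟩
    refine ⟨fun p q => epsE (swapE p) * epsE (swapE q) * d (swapE p) (swapE q),
      fun p q i j => ?_⟩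
    have key : ∀ e (ψ : QVec n),
        Had n (errFamZZ n e ψ) = epsE (swapE e) • errFamXX n (swapE e) (Had n ψ) := by
      intro e ψ
      have hm := master (swapE e) ψ
      rw [swapE_invol] at hm
      rw [hm, smul_smul, epsE_sq, one_smul]
    rw [← qinner_had, key, key, qinner_smul_left, qinner_smul_right, epsE_conj, h]
    by_cases hij : i = j
    · simp [hij]; ring
    · simp [hij]

lemma stepA {n : ℕ} (x y : QVec n) :
    Corrects (errFamZZ n) ![x, y] ↔ Corrects (errFamZZ n) ![x + y, x - y] := by
  constructor
  · rintro ⟨d, h⟩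
    refine ⟨fun p q => 2 * d p q, fun p q i j => ?_⟩
    have h00 := h p q 0 0
    have h01 := h p q 0 1
    have h10 := h p q 1 0
    have h11 := h p q 1 1
    simp only [Matrix.cons_val_zero, Matrix.cons_val_one, Matrix.head_cons,
      if_true] at h00 h01 h10 h11
    norm_num at h00 h01 h10 h11
    fin_cases i <;> fin_cases j <;>
      simp only [Matrix.cons_val_zero, Matrix.cons_val_one, Matrix.head_cons,
        errZZ_add, errZZ_sub, qinner_add_left, qinner_add_right,
        qinner_sub_left, qinner_sub_right, Fin.mk_zero, Fin.mk_one] <;>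
      norm_num
    · linear_combination h00 + h01 + h10 + h11
    · linear_combination h00 - h11 + h10 - h01
    · linear_combination h00 - h11 - h10 + h01
    · linear_combination h00 + h11 - h01 - h10
  · rintro ⟨d, h⟩
    refine ⟨fun p q => d p q / 2, fun p q i j => ?_⟩
    have h00 := h p q 0 0
    have h01 := h p q 0 1
    have h10 := h p q 1 0
    have h11 := h p q 1 1
    simp only [Matrix.cons_val_zero, Matrix.cons_val_one, Matrix.head_cons,
      errZZ_add, errZZ_sub, qinner_add_left, qinner_add_right,
      qinner_sub_left, qinner_sub_right, if_true] at h00 h01 h10 h11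
    norm_num at h00 h01 h10 h11
    fin_cases i <;> fin_cases j <;>
      simp only [Matrix.cons_val_zero, Matrix.cons_val_one, Matrix.head_cons,
        Fin.mk_zero, Fin.mk_one] <;>
      norm_num
    · linear_combination (h00 + h01 + h10 + h11) / 4
    · linear_combination (h00 - h01 + h10 - h11) / 4
    · linear_combination (h00 + h01 - h10 - h11) / 4
    · linear_combination (h00 - h01 - h10 + h11) / 4


/-- Theorem 6: for a permutationally invariant code satisfying conditions (I) and (II),
the code corrects all one-bit errors together with all `Z_r Z_s` iff its Hadamard code map
image corrects all one-bit errors together with all `X_r X_s`. -/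
theorem stmt7 (n : ℕ) (hn : Odd n) (a : ℕ → ℂ) (c0 c1 C0 C1 : QVec n)
    (hc0 : c0 = ∑ j ∈ Finset.range ((n - 1) / 2 + 1), a (2 * j) • Wvec n (2 * j))
    (hc1 : c1 = ∑ j ∈ Finset.range ((n - 1) / 2 + 1),
      a (n - 2 * j - 1) • Wvec n (2 * j + 1))
    (hC0 : C0 = Had n c0 + Had n c1) (hC1 : C1 = Had n c0 - Had n c1) :
    Corrects (errFamZZ n) ![c0, c1] ↔ Corrects (errFamXX n) ![C0, C1] := by
  have e3 : (fun i => Had n (![c0 + c1, c0 - c1] i)) = ![C0, C1] := by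
    funext i
    fin_cases i <;>
      simp [hC0, hC1, had_add, had_sub]
  rw [stepA c0 c1, stepB, e3]
end
end

section
/- For all 0 ≤ j, k ≤ n, every choice of f̄ ∈ {I, X̄, Ȳ, Z̄}, every g ∈ {X, Y, Z}, and all r ≠ s, one has ⟨f̄·W_j, (g_r − g_s)·W_k⟩ = 0. -/
open scoped BigOperators

noncomputable section

/-- Average error `X̄ = (1/n) Σ_r X_r`. -/
def Xbar (n : ℕ) (ψ : QVec n) : QVec n := (n : ℂ)⁻¹ • ∑ r : Fin n, PX r ψ

/-- Average error `Ȳ = (1/n) Σ_r Y_r`. -/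
def Ybar (n : ℕ) (ψ : QVec n) : QVec n := (n : ℂ)⁻¹ • ∑ r : Fin n, PY r ψ

/-- Average error `Z̄ = (1/n) Σ_r Z_r`. -/
def Zbar (n : ℕ) (ψ : QVec n) : QVec n := (n : ℂ)⁻¹ • ∑ r : Fin n, PZ r ψ

/-- Precomposition by a permutation. -/
def Tp {n : ℕ} (σ : Equiv.Perm (Fin n)) (ψ : QVec n) : QVec n := fun v => ψ (v ∘ σ)

def compEquiv {n : ℕ} (σ : Equiv.Perm (Fin n)) : (Fin n → Bool) ≃ (Fin n → Bool) where
  toFun v := v ∘ σ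
  invFun v := v ∘ σ.symm
  left_inv v := by funext i; simp
  right_inv v := by funext i; simp

lemma qinner_Tp {n : ℕ} (σ : Equiv.Perm (Fin n)) (ψ φ : QVec n) :
    qinner (Tp σ ψ) (Tp σ φ) = qinner ψ φ := by
  unfold qinner Tp
  exact Fintype.sum_bijective (compEquiv σ) (compEquiv σ).bijective _ _ (fun v => rfl)

lemma wt_comp {n : ℕ} (σ : Equiv.Perm (Fin n)) (v : Fin n → Bool) :
    wt (v ∘ σ) = wt v := by
  unfold wt
  apply Finset.card_bij' (fun i _ => σ i) (fun i _ => σ.symm i) <;> simp [Function.comp]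

lemma Tp_Wvec {n : ℕ} (σ : Equiv.Perm (Fin n)) (k : ℕ) :
    Tp σ (Wvec n k) = Wvec n k := by
  funext v; simp [Tp, Wvec, wt_comp]

lemma bflip_comp {n : ℕ} (σ : Equiv.Perm (Fin n)) (a : Fin n) (v : Fin n → Bool) :
    bflip a (v ∘ σ) = (bflip (σ a) v) ∘ σ := by
  funext i
  simp only [bflip, Function.comp, Function.update]
  by_cases h : i = a
  · subst h; simp
  · have h2 : ¬ (σ i = σ a) := fun hc => h (σ.injective hc)
    simp [h, h2]

lemma Tp_PX {n : ℕ} (σ : Equiv.Perm (Fin n)) (a : Fin n) (ψ : QVec n) :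
    Tp σ (PX a ψ) = PX (σ a) (Tp σ ψ) := by
  funext v; simp [Tp, PX, bflip_comp]

lemma Tp_PZ {n : ℕ} (σ : Equiv.Perm (Fin n)) (a : Fin n) (ψ : QVec n) :
    Tp σ (PZ a ψ) = PZ (σ a) (Tp σ ψ) := by
  funext v; simp [Tp, PZ, Function.comp]

lemma Tp_PY {n : ℕ} (σ : Equiv.Perm (Fin n)) (a : Fin n) (ψ : QVec n) :
    Tp σ (PY a ψ) = PY (σ a) (Tp σ ψ) := by
  funext v; simp [Tp, PY, bflip_comp, Function.comp]

lemma Tp_pauli {n : ℕ} (σ : Equiv.Perm (Fin n)) (g : Fin 3) (a : Fin n) (ψ : QVec n) :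
    Tp σ (pauli g a ψ) = pauli g (σ a) (Tp σ ψ) := by
  unfold pauli
  split_ifs
  · exact Tp_PX σ a ψ
  · exact Tp_PY σ a ψ
  · exact Tp_PZ σ a ψ

lemma Tp_Xbar {n : ℕ} (σ : Equiv.Perm (Fin n)) (ψ : QVec n) :
    Tp σ (Xbar n ψ) = Xbar n (Tp σ ψ) := by
  funext v
  simp only [Tp, Xbar, Pi.smul_apply, Finset.sum_apply, smul_eq_mul]
  congr 1
  rw [← Equiv.sum_comp σ (fun a => PX a (Tp σ ψ) v)]
  exact Finset.sum_congr rfl fun a _ => congrFun (Tp_PX σ a ψ) v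

lemma Tp_Ybar {n : ℕ} (σ : Equiv.Perm (Fin n)) (ψ : QVec n) :
    Tp σ (Ybar n ψ) = Ybar n (Tp σ ψ) := by
  funext v
  simp only [Tp, Ybar, Pi.smul_apply, Finset.sum_apply, smul_eq_mul]
  congr 1
  rw [← Equiv.sum_comp σ (fun a => PY a (Tp σ ψ) v)]
  exact Finset.sum_congr rfl fun a _ => congrFun (Tp_PY σ a ψ) v

lemma Tp_Zbar {n : ℕ} (σ : Equiv.Perm (Fin n)) (ψ : QVec n) :
    Tp σ (Zbar n ψ) = Zbar n (Tp σ ψ) := by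
  funext v
  simp only [Tp, Zbar, Pi.smul_apply, Finset.sum_apply, smul_eq_mul]
  congr 1
  rw [← Equiv.sum_comp σ (fun a => PZ a (Tp σ ψ) v)]
  exact Finset.sum_congr rfl fun a _ => congrFun (Tp_PZ σ a ψ) v

lemma qinner_sub {n : ℕ} (ψ φ₁ φ₂ : QVec n) :
    qinner ψ (φ₁ - φ₂) = qinner ψ φ₁ - qinner ψ φ₂ := by
  simp [qinner, mul_sub, Finset.sum_sub_distrib]

/-- Orthogonality of inequivalent representations:
`⟨f̄ W_j, (g_r - g_s) W_k⟩ = 0` for `f̄ ∈ {I, X̄, Ȳ, Z̄}`, `g ∈ {X, Y, Z}`, `r ≠ s`. -/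
theorem stmt9 (n : ℕ) (F : QVec n → QVec n)
    (hF : F = id ∨ F = Xbar n ∨ F = Ybar n ∨ F = Zbar n)
    (g : Fin 3) (r s : Fin n) (hrs : r ≠ s) (j k : ℕ) (hj : j ≤ n) (hk : k ≤ n) :
    qinner (F (Wvec n j)) (pauli g r (Wvec n k) - pauli g s (Wvec n k)) = 0 := by
  set σ : Equiv.Perm (Fin n) := Equiv.swap r s with hσ
  have h1 : Tp σ (F (Wvec n j)) = F (Wvec n j) := by
    rcases hF with h | h | h | h <;> subst h
    · simp [Tp_Wvec]
    · rw [Tp_Xbar, Tp_Wvec]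
    · rw [Tp_Ybar, Tp_Wvec]
    · rw [Tp_Zbar, Tp_Wvec]
  have h2 : Tp σ (pauli g r (Wvec n k)) = pauli g s (Wvec n k) := by
    rw [Tp_pauli, Tp_Wvec, hσ, Equiv.swap_apply_left]
  have key : qinner (F (Wvec n j)) (pauli g r (Wvec n k))
      = qinner (F (Wvec n j)) (pauli g s (Wvec n k)) := by
    conv_rhs => rw [← h1, ← h2, qinner_Tp]
  rw [qinner_sub, key, sub_self]
end
end

section
/- The only real numbers a_0, a_2, a_4 satisfying the three equations a_2 a_4 = 0, a_0 a_4 + 3 a_2^2 = 0, and a_0^2 + 2 a_2^2 − 3 a_4^2 = 0 are a_0 = a_2 = a_4 = 0. (Consequently there is no nontrivial permutationally invariant 5-bit code with real coefficients correcting all one-bit errors.) -/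
/-- The one-bit error-correction equations for a 5-bit permutationally invariant code
with real coefficients have only the trivial solution. -/
theorem stmt12 (a0 a2 a4 : ℝ)
    (h1 : a2 * a4 = 0) (h2 : a0 * a4 + 3 * a2 ^ 2 = 0)
    (h3 : a0 ^ 2 + 2 * a2 ^ 2 - 3 * a4 ^ 2 = 0) :
    a0 = 0 ∧ a2 = 0 ∧ a4 = 0 := by
  rcases mul_eq_zero.mp h1 with h | h
  · have ha0 : a0 * a4 = 0 := by nlinarith
    rcases mul_eq_zero.mp ha0 with h0 | h0
    · have : a4 = 0 := by nlinarith
      refine ⟨h0, h, this⟩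
    · have : a0 = 0 := by nlinarith
      exact ⟨this, h, h0⟩
  · have ha2 : a2 = 0 := by nlinarith
    have ha0 : a0 = 0 := by nlinarith
    exact ⟨ha0, ha2, h⟩
end

section
/- A quadruple of real numbers (a_0, a_2, a_4, a_6) satisfies the three equations 3 a_2 a_6 + 5 a_4^2 = 0, a_0 a_6 + 15 a_2 a_4 = 0, and a_0^2 + 9 a_2^2 − 5 a_4^2 − 5 a_6^2 = 0 if and only if there exist t ∈ R and ε ∈ {+1, −1} such that (a_0, a_2, a_4, a_6) = t·(ε·√5, −1/3, ε/√5, 1). In particular, up to scaling there are exactly two nonzero real solutions. -/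
/-- The real solutions of the one-bit error-correction equations for a 7-bit
permutationally invariant code are exactly the scalings of the two codes
`(±√5, -1/3, ±1/√5, 1)`. -/
theorem stmt15 (a0 a2 a4 a6 : ℝ) :
    (3 * a2 * a6 + 5 * a4 ^ 2 = 0
      ∧ a0 * a6 + 15 * a2 * a4 = 0
      ∧ a0 ^ 2 + 9 * a2 ^ 2 - 5 * a4 ^ 2 - 5 * a6 ^ 2 = 0)
    ↔ ∃ t ε : ℝ, (ε = 1 ∨ ε = -1)
        ∧ a0 = t * (ε * Real.sqrt 5) ∧ a2 = t * (-1 / 3)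
        ∧ a4 = t * (ε / Real.sqrt 5) ∧ a6 = t := by
  have hs5 : Real.sqrt 5 > 0 := Real.sqrt_pos.mpr (by norm_num)
  have hsq : Real.sqrt 5 ^ 2 = 5 := Real.sq_sqrt (by norm_num)
  have hsne : Real.sqrt 5 ≠ 0 := ne_of_gt hs5
  constructor
  · rintro ⟨h1, h2, h3⟩
    by_cases h6 : a6 = 0
    · subst h6
      have h4 : a4 = 0 := pow_eq_zero_iff two_ne_zero |>.mp (by linarith)
      have h0 : a0 = 0 := pow_eq_zero_iff two_ne_zero |>.mp (by nlinarith [sq_nonneg a0, sq_nonneg a2])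
      have ha2 : a2 = 0 := pow_eq_zero_iff two_ne_zero |>.mp (by nlinarith [sq_nonneg a0, sq_nonneg a2])
      exact ⟨0, 1, Or.inl rfl, by simp [h0], by simp [ha2], by simp [h4], by simp⟩
    · have key1 : a0 * a6 ^ 2 = 25 * a4 ^ 3 := by linear_combination a6 * h2 - 5 * a4 * h1
      have kA : a0 ^ 2 * a6 ^ 4 = 625 * a4 ^ 6 := by
        linear_combination (a0 * a6 ^ 2 + 25 * a4 ^ 3) * key1
      have kB : 9 * a2 ^ 2 * a6 ^ 2 = 25 * a4 ^ 4 := by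
        linear_combination (3 * a2 * a6 - 5 * a4 ^ 2) * h1
      have key3 : a6 ^ 2 = 5 * a4 ^ 2 := by
        have h : (5 * a4 ^ 2 - a6 ^ 2) * (25 * a4 ^ 4 + 6 * a4 ^ 2 * a6 ^ 2 + a6 ^ 4) = 0 := by
          linear_combination (a6 ^ 4 * h3 - kA - a6 ^ 2 * kB) / 5
        have hpos : 25 * a4 ^ 4 + 6 * a4 ^ 2 * a6 ^ 2 + a6 ^ 4 > 0 := by positivity
        rcases mul_eq_zero.mp h with h' | h'
        · linarith
        · exact absurd h' (ne_of_gt hpos)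
      have ha0 : a0 = 5 * a4 := by
        have : (a0 - 5 * a4) * a6 ^ 2 = 0 := by linear_combination key1 - 5 * a4 * key3
        rcases mul_eq_zero.mp this with h' | h'
        · linarith
        · exact absurd (pow_eq_zero_iff two_ne_zero |>.mp h') h6
      have ha2 : a2 = -a6 / 3 := by
        have : (a2 + a6 / 3) * a6 = 0 := by linear_combination h1 / 3 + key3 / 3
        rcases mul_eq_zero.mp this with h' | h'
        · linarith
        · exact absurd h' h6
      refine ⟨a6, Real.sqrt 5 * a4 / a6, ?_, ?_, ?_, ?_, rfl⟩
      · rw [← mul_self_eq_one_iff]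
        field_simp
        linear_combination a4 ^ 2 * hsq - key3
      · have hval : a6 * (Real.sqrt 5 * a4 / a6 * Real.sqrt 5) = 5 * a4 := by
          field_simp
          linear_combination a4 * hsq
        rw [hval]; exact ha0
      · rw [ha2]; ring
      · field_simp
  · rintro ⟨t, ε, hε, h0, h2, h4, h6⟩
    subst h0 h2 h4 h6
    rcases hε with h | h <;> subst h
    · exact ⟨by field_simp; linear_combination (-a6 ^ 2) * hsq, by field_simp; linear_combination 3 * a6 ^ 2 * hsq,
        by field_simp; linear_combination 9 * a6 ^ 2 * (Real.sqrt 5 ^ 2 + 1) * hsq⟩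
    · exact ⟨by field_simp; linear_combination (-a6 ^ 2) * hsq, by field_simp; linear_combination -3 * a6 ^ 2 * hsq,
        by field_simp; linear_combination 9 * a6 ^ 2 * (Real.sqrt 5 ^ 2 + 1) * hsq⟩
end

section
/- A quadruple of complex numbers (a_0, a_2, a_4, a_6) satisfies the six equations 10|a_4|^2 + 3(ā_2 a_6 + a_2 ā_6) = 0; ā_2 a_6 − a_2 ā_6 = 0; (ā_0 a_6 + a_0 ā_6) + 15(ā_2 a_4 + a_2 ā_4) = 0; (a_0 ā_6 − ā_0 a_6) + 5(a_2 ā_4 − ā_2 a_4) = 0; |a_0|^2 + 9|a_2|^2 − 5|a_4|^2 − 5|a_6|^2 = 0; and (ā_0 a_2 − a_0 ā_2) + 10(ā_2 a_4 − a_2 ā_4) + 5(ā_4 a_6 − a_4 ā_6) = 0, if and only if there exist λ ∈ C and ε ∈ {+1, −1} such that (a_0, a_2, a_4, a_6) = λ·(ε·√5, −1/3, ε/√5, 1). In particular, there are no permutationally invariant 7-bit codes with complex coefficients beyond complex multiples of the two real ones. -/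
open ComplexConjugate

lemma habs (z : ℂ) : ((‖z‖ : ℝ) : ℂ)^2 = z * conj z := by
  rw [Complex.mul_conj]
  norm_cast
  exact Complex.sq_norm z

lemma auxR (p q r s x y : ℝ)
    (e1 : 10*(x^2+y^2) + 6*r = 0)
    (e2 : s = 0)
    (e3 : p + 15*(r*x + s*y) = 0)
    (e4 : q + 5*(s*x - r*y) = 0)
    (e5 : p^2+q^2+9*(r^2+s^2) - 5*(x^2+y^2) - 5 = 0)
    (e6 : (p*s - q*r) + 10*(r*y - s*x) - 5*y = 0) :
    ∃ ε : ℝ, (ε = 1 ∨ ε = -1) ∧ p = ε * Real.sqrt 5 ∧ q = 0 ∧ r = -1/3 ∧ s = 0 ∧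
      x = ε / Real.sqrt 5 ∧ y = 0 := by
  subst e2
  have hycrit : y * (r-1)^2 = 0 := by linear_combination (-(1/5)) * e6 - (r/5) * e4
  have hr : r = -(5/3)*x^2 - (5/3)*y^2 := by linarith
  have hy : y = 0 := by
    rcases mul_eq_zero.mp hycrit with h | h
    · exact h
    · nlinarith [sq_nonneg x, sq_nonneg y]
  subst hy
  have hq : q = 0 := by linarith
  have hp : p = -(15*(r*x)) := by linarith
  have hr' : r = -(5/3)*x^2 := by linarith
  subst hq
  rw [hp, hr'] at e5
  have key : (5*x^2 - 1) * (25*x^4 + 6*x^2 + 1) = 0 := by linear_combination (1/5) * e5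
  have hx2 : x^2 = 1/5 := by
    rcases mul_eq_zero.mp key with h | h
    · linarith
    · nlinarith [sq_nonneg x, sq_nonneg (x^2)]
  have hS : Real.sqrt 5 ^ 2 = 5 := Real.sq_sqrt (by norm_num)
  have hSne : Real.sqrt 5 ≠ 0 := by positivity
  refine ⟨Real.sqrt 5 * x, ?_, ?_, rfl, by linarith, rfl, ?_, rfl⟩
  · have h2 : (Real.sqrt 5 * x - 1) * (Real.sqrt 5 * x + 1) = 0 := by
      nlinarith [hS, hx2]
    rcases mul_eq_zero.mp h2 with h | h
    · left; linarith
    · right; linarith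
  · rw [hp, hr']; linear_combination 25*x*hx2 - x*hS
  · field_simp

lemma auxC (b0 b2 b4 : ℂ)
    (h1 : 10 * (b4 * conj b4) + 3 * (conj b2 + b2) = 0)
    (h2 : conj b2 - b2 = 0)
    (h3 : (conj b0 + b0) + 15 * (conj b2 * b4 + b2 * conj b4) = 0)
    (h4 : (b0 - conj b0) + 5 * (b2 * conj b4 - conj b2 * b4) = 0)
    (h5 : b0 * conj b0 + 9 * (b2 * conj b2) - 5 * (b4 * conj b4) - 5 = 0)
    (h6 : (conj b0 * b2 - b0 * conj b2) + 10 * (conj b2 * b4 - b2 * conj b4)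
        + 5 * (conj b4 - b4) = 0) :
    ∃ ε : ℝ, (ε = 1 ∨ ε = -1) ∧ b0 = ((ε * Real.sqrt 5 : ℝ) : ℂ) ∧ b2 = -1/3 ∧
      b4 = ((ε / Real.sqrt 5 : ℝ) : ℂ) := by
  simp only [Complex.ext_iff, Complex.add_re, Complex.add_im, Complex.mul_re, Complex.mul_im,
    Complex.sub_re, Complex.sub_im, Complex.conj_re, Complex.conj_im, Complex.re_ofNat,
    Complex.im_ofNat, Complex.zero_re, Complex.zero_im, Complex.ofReal_re,
    Complex.ofReal_im] at h1 h2 h3 h4 h5 h6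
  obtain ⟨h1r, h1i⟩ := h1
  obtain ⟨h2r, h2i⟩ := h2
  obtain ⟨h3r, h3i⟩ := h3
  obtain ⟨h4r, h4i⟩ := h4
  obtain ⟨h5r, h5i⟩ := h5
  obtain ⟨h6r, h6i⟩ := h6
  obtain ⟨ε, hε, hp, hq, hr, hs, hx, hy⟩ :=
    auxR b0.re b0.im b2.re b2.im b4.re b4.im
      (by nlinarith) (by linarith) (by nlinarith) (by nlinarith) (by nlinarith) (by nlinarith)
  refine ⟨ε, hε, ?_, ?_, ?_⟩
  · apply Complex.ext <;> simp [hp, hq]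
  · apply Complex.ext <;> simp [hr, hs]
  · apply Complex.ext <;> simp [hx, hy]

set_option maxHeartbeats 2000000 in
/-- The complex solutions of the one-bit error-correction equations for a 7-bit
permutationally invariant code are exactly the complex multiples of the two real codes
`(±√5, -1/3, ±1/√5, 1)`. -/
theorem stmt16 (a0 a2 a4 a6 : ℂ) :
    (10 * (‖a4‖ : ℂ) ^ 2 + 3 * (conj a2 * a6 + a2 * conj a6) = 0
      ∧ conj a2 * a6 - a2 * conj a6 = 0
      ∧ (conj a0 * a6 + a0 * conj a6) + 15 * (conj a2 * a4 + a2 * conj a4) = 0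
      ∧ (a0 * conj a6 - conj a0 * a6) + 5 * (a2 * conj a4 - conj a2 * a4) = 0
      ∧ (‖a0‖ : ℂ) ^ 2 + 9 * (‖a2‖ : ℂ) ^ 2
          - 5 * (‖a4‖ : ℂ) ^ 2 - 5 * (‖a6‖ : ℂ) ^ 2 = 0
      ∧ (conj a0 * a2 - a0 * conj a2) + 10 * (conj a2 * a4 - a2 * conj a4)
          + 5 * (conj a4 * a6 - a4 * conj a6) = 0)
    ↔ ∃ (lam : ℂ) (ε : ℝ), (ε = 1 ∨ ε = -1)
        ∧ a0 = lam * ((ε * Real.sqrt 5 : ℝ) : ℂ) ∧ a2 = lam * (-1 / 3)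
        ∧ a4 = lam * ((ε / Real.sqrt 5 : ℝ) : ℂ) ∧ a6 = lam := by
  constructor
  · rintro ⟨h1, h2, h3, h4, h5, h6⟩
    rw [habs a4] at h1
    rw [habs a0, habs a2, habs a4, habs a6] at h5
    by_cases hz : a6 = 0
    · subst hz
      have ha4 : a4 = 0 := by
        have h1' : a4 * conj a4 = 0 := by
          simpa using h1
        rcases mul_eq_zero.mp h1' with h | h
        · exact h
        · simpa using congrArg (starRingEnd ℂ) h
      subst ha4
      have h5' : Complex.normSq a0 + 9 * Complex.normSq a2 = 0 := by
        have : (Complex.normSq a0 : ℂ) + 9 * (Complex.normSq a2 : ℂ) = 0 := by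
          rw [← Complex.mul_conj, ← Complex.mul_conj]
          linear_combination h5
        exact_mod_cast this
      have ha0 : a0 = 0 := by
        rw [← Complex.normSq_eq_zero]
        nlinarith [Complex.normSq_nonneg a0, Complex.normSq_nonneg a2]
      have ha2 : a2 = 0 := by
        rw [← Complex.normSq_eq_zero]
        nlinarith [Complex.normSq_nonneg a0, Complex.normSq_nonneg a2]
      exact ⟨0, 1, Or.inl rfl, by simp [ha0], by simp [ha2], by simp, rfl⟩
    · have hc : conj a6 ≠ 0 := fun h => hz (by simpa using congrArg (starRingEnd ℂ) h)
      have H1 : 10 * ((a4/a6) * conj (a4/a6)) + 3 * (conj (a2/a6) + a2/a6) = 0 := by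
        rw [map_div₀, map_div₀]
        field_simp
        linear_combination h1
      have H2 : conj (a2/a6) - a2/a6 = 0 := by
        rw [map_div₀]
        field_simp
        linear_combination h2
      have H3 : (conj (a0/a6) + a0/a6) + 15 * (conj (a2/a6) * (a4/a6) + (a2/a6) * conj (a4/a6)) = 0 := by
        rw [map_div₀, map_div₀, map_div₀]
        field_simp
        linear_combination h3
      have H4 : ((a0/a6) - conj (a0/a6)) + 5 * ((a2/a6) * conj (a4/a6) - conj (a2/a6) * (a4/a6)) = 0 := by
        rw [map_div₀, map_div₀, map_div₀]
        field_simp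
        linear_combination h4
      have H5 : (a0/a6) * conj (a0/a6) + 9 * ((a2/a6) * conj (a2/a6)) - 5 * ((a4/a6) * conj (a4/a6)) - 5 = 0 := by
        rw [map_div₀, map_div₀, map_div₀]
        field_simp
        linear_combination h5
      have H6 : (conj (a0/a6) * (a2/a6) - (a0/a6) * conj (a2/a6))
          + 10 * (conj (a2/a6) * (a4/a6) - (a2/a6) * conj (a4/a6))
          + 5 * (conj (a4/a6) - (a4/a6)) = 0 := by
        rw [map_div₀, map_div₀, map_div₀]
        field_simp
        linear_combination h6
      obtain ⟨ε, hε, hb0, hb2, hb4⟩ := auxC (a0/a6) (a2/a6) (a4/a6) H1 H2 H3 H4 H5 H6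
      rw [div_eq_iff hz] at hb0 hb2 hb4
      exact ⟨a6, ε, hε, by rw [hb0]; ring, by rw [hb2]; ring, by rw [hb4]; ring, rfl⟩
  · rintro ⟨lam, ε, hε, h0, h2, h4, h6⟩
    subst h0; subst h2; subst h4; subst h6
    have hE2 : ((ε : ℝ) : ℂ) * ((ε : ℝ) : ℂ) = 1 := by
      rcases hε with h | h <;> subst h <;> norm_num
    have hS5 : ((Real.sqrt 5 : ℝ) : ℂ) * ((Real.sqrt 5 : ℝ) : ℂ) = 5 := by
      rw [← Complex.ofReal_mul, Real.mul_self_sqrt (by norm_num : (0:ℝ) ≤ 5)]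
      norm_num
    have h0' : ((ε * Real.sqrt 5 : ℝ) : ℂ) = ((ε : ℝ) : ℂ) * ((Real.sqrt 5 : ℝ) : ℂ) := by
      push_cast; ring
    have h4' : ((ε / Real.sqrt 5 : ℝ) : ℂ) = ((ε : ℝ) : ℂ) * ((Real.sqrt 5 : ℝ) : ℂ) / 5 := by
      have hSne : ((Real.sqrt 5 : ℝ) : ℂ) ≠ 0 := by
        rw [Complex.ofReal_ne_zero]; positivity
      push_cast
      rw [div_eq_div_iff hSne (by norm_num : (5:ℂ) ≠ 0)]
      linear_combination (-((ε : ℝ) : ℂ)) * hS5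
    simp only [habs, h0', h4']
    simp only [map_mul, map_div₀, map_neg, map_one, map_ofNat, Complex.conj_ofReal]
    refine ⟨?_, by ring, by ring, by ring, ?_, by ring⟩
    · linear_combination (2/5) * a6 * conj a6 * (((Real.sqrt 5 : ℝ) : ℂ) * ((Real.sqrt 5 : ℝ) : ℂ)) * hE2
        + (2/5) * a6 * conj a6 * hS5
    · linear_combination (4/5) * a6 * conj a6 * (((Real.sqrt 5 : ℝ) : ℂ) * ((Real.sqrt 5 : ℝ) : ℂ)) * hE2
        + (4/5) * a6 * conj a6 * hS5
end

section
/- The set of real quadruples (a_0, a_2, a_4, a_6) satisfying the three equations a_2 + 7 a_4 a_6 = 0, 35 a_4^2 + a_0 + 28 a_2 a_6 = 0, and a_0^2 + 20 a_2^2 + 14 a_4^2 − 28 a_6^2 − 7 = 0 (these are the one-bit error-correction equations for a permutationally invariant 9-bit code normalized with a_8 = 1) is infinite; moreover, infinitely many of these solutions have all four coordinates a_0, a_2, a_4, a_6 nonzero. -/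
noncomputable def F17 (y x : ℝ) : ℝ :=
  (196 * x * y ^ 2 - 35 * x ^ 2) ^ 2 + 980 * x ^ 2 * y ^ 2 + 14 * x ^ 2 - 28 * y ^ 2 - 7

lemma key17 (y : ℝ) (hy : 1 ≤ y) :
    ∃ x : ℝ, 0 < x ∧ 35 * x < 196 * y ^ 2 ∧ F17 y x = 0 := by
  have hb : (0 : ℝ) ≤ 196 * y ^ 2 / 35 := by positivity
  have hcont : ContinuousOn (F17 y) (Set.Icc 0 (196 * y ^ 2 / 35)) := by
    apply Continuous.continuousOn; unfold F17; continuity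
  have h0 : F17 y 0 < 0 := by
    unfold F17; nlinarith [sq_nonneg y]
  have h1 : 0 < F17 y (196 * y ^ 2 / 35) := by
    unfold F17
    have h2 : (1:ℝ) ≤ y ^ 2 := by nlinarith
    have h4 : (1:ℝ) ≤ y ^ 4 := by nlinarith
    have h6 : (1:ℝ) ≤ y ^ 6 := by nlinarith
    nlinarith [h4, h6]
  have := intermediate_value_Ioo hb hcont (a := 0) (b := 196 * y ^ 2 / 35)
  have hmem : (0 : ℝ) ∈ Set.Ioo (F17 y 0) (F17 y (196 * y ^ 2 / 35)) := ⟨h0, h1⟩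
  obtain ⟨x, hx, hfx⟩ := this hmem
  exact ⟨x, hx.1, by nlinarith [hx.2], hfx⟩

/-- The set of real solutions `(a₀, a₂, a₄, a₆)` of the one-bit error-correction
equations for a 9-bit permutationally invariant code normalized with `a₈ = 1`
is infinite, and infinitely many solutions have all four coordinates nonzero. -/
theorem stmt17 :
    ({p : ℝ × ℝ × ℝ × ℝ |
        p.2.1 + 7 * p.2.2.1 * p.2.2.2 = 0
        ∧ 35 * p.2.2.1 ^ 2 + p.1 + 28 * p.2.1 * p.2.2.2 = 0
        ∧ p.1 ^ 2 + 20 * p.2.1 ^ 2 + 14 * p.2.2.1 ^ 2 - 28 * p.2.2.2 ^ 2 - 7 = 0}).Infinite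
    ∧ ({p : ℝ × ℝ × ℝ × ℝ |
        (p.2.1 + 7 * p.2.2.1 * p.2.2.2 = 0
          ∧ 35 * p.2.2.1 ^ 2 + p.1 + 28 * p.2.1 * p.2.2.2 = 0
          ∧ p.1 ^ 2 + 20 * p.2.1 ^ 2 + 14 * p.2.2.1 ^ 2 - 28 * p.2.2.2 ^ 2 - 7 = 0)
        ∧ p.1 ≠ 0 ∧ p.2.1 ≠ 0 ∧ p.2.2.1 ≠ 0 ∧ p.2.2.2 ≠ 0}).Infinite := by
  have hinf : Infinite ↥(Set.Ici (1:ℝ)) :=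
    Set.infinite_coe_iff.2 (Set.Ici_infinite 1)
  have h2 : ({p : ℝ × ℝ × ℝ × ℝ |
        (p.2.1 + 7 * p.2.2.1 * p.2.2.2 = 0
          ∧ 35 * p.2.2.1 ^ 2 + p.1 + 28 * p.2.1 * p.2.2.2 = 0
          ∧ p.1 ^ 2 + 20 * p.2.1 ^ 2 + 14 * p.2.2.1 ^ 2 - 28 * p.2.2.2 ^ 2 - 7 = 0)
        ∧ p.1 ≠ 0 ∧ p.2.1 ≠ 0 ∧ p.2.2.1 ≠ 0 ∧ p.2.2.2 ≠ 0}).Infinite := by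
    apply Set.infinite_of_injective_forall_mem
      (f := fun y : Set.Ici (1:ℝ) =>
        let x := Classical.choose (key17 y.1 y.2)
        ((196 * x * (y:ℝ) ^ 2 - 35 * x ^ 2, -7 * x * (y:ℝ), x, (y:ℝ)) : ℝ × ℝ × ℝ × ℝ))
    case hi =>
      intro a b hab
      apply Subtype.ext
      have := congrArg (fun p : ℝ × ℝ × ℝ × ℝ => p.2.2.2) hab
      simpa using this
    case hf =>
      rintro ⟨y, hy⟩
      obtain ⟨hx0, hxb, hfx⟩ := Classical.choose_spec (key17 y hy)
      set x := Classical.choose (key17 y hy) with hxdef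
      have hy0 : (0:ℝ) < y := lt_of_lt_of_le one_pos hy
      simp only [Set.mem_setOf_eq]
      refine ⟨⟨by ring, by ring, ?_⟩, ?_, ?_, ?_, ?_⟩
      · unfold F17 at hfx; nlinarith [hfx]
      · have : 0 < 196 * x * y ^ 2 - 35 * x ^ 2 := by nlinarith
        simpa using this.ne'
      · have : -7 * x * y < 0 := by nlinarith
        simpa using this.ne
      · exact hx0.ne'
      · exact hy0.ne'
  refine ⟨h2.mono ?_, h2⟩
  intro p hp
  exact hp.1
end

section
/- Let n = 9 and let a_0, a_2, a_4, a_6, a_8 be complex numbers. Define the permutationally invariant code c_0 = Σ_{j=0}^{4} a_{2j} W_{2j}, c_1 = Σ_{j=0}^{4} a_{8−2j} W_{2j+1} in C^{2^9}. If the Knill–Laflamme condition holds for the error set E = {I} ∪ {X_k, Y_k, Z_k : 1 ≤ k ≤ 9} ∪ {Z_rZ_s : 1 ≤ r < s ≤ 9}, then a_0 = a_2 = a_4 = a_6 = a_8 = 0. That is, no 9-bit permutationally invariant code of this form can correct all one-bit errors together with all double errors of the form Z_rZ_s. -/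
open scoped BigOperators

noncomputable section
set_option maxRecDepth 1000000
set_option maxHeartbeats 2000000

/-- The error set `{I} ∪ {X_k, Y_k, Z_k : 1 ≤ k ≤ 9} ∪ {Z_r Z_s : 1 ≤ r < s ≤ 9}`. -/
def errFamZZ9 :
    (Option (Fin 3 × Fin 9) ⊕ {p : Fin 9 × Fin 9 // p.1 < p.2}) → (QVec 9 → QVec 9) :=
  fun e => match e with
  | Sum.inl none => id
  | Sum.inl (some (t, r)) => pauli t r
  | Sum.inr p => fun ψ => PZ p.1.1 (PZ p.1.2 ψ)


set_option maxRecDepth 1000000 in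
lemma klaux_master (f g : QVec 9) (A B : Fin 5 → ℂ) (wA wB : Fin 5 → ℕ)
    (sL sR : (Fin 9 → Bool) → ℤ) (gL gR : (Fin 9 → Bool) → (Fin 9 → Bool)) (mu : ℂ)
    (M : Fin 5 → Fin 5 → ℤ)
    (hf : ∀ v, f v = (sL v : ℂ) * ∑ j, A j * (if wt (gL v) = wA j then 1 else 0))
    (hg : ∀ v, g v = mu * ((sR v : ℂ) * ∑ k, B k * (if wt (gR v) = wB k then 1 else 0)))
    (hM : ∀ j k, (∑ v : Fin 9 → Bool,
        (if wt (gL v) = wA j then 1 else 0) * (if wt (gR v) = wB k then 1 else 0) * (sL v * sR v)) = M j k) :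
    qinner f g = mu * ∑ j, ∑ k, (starRingEnd ℂ) (A j) * B k * (M j k : ℂ) := by
  unfold qinner
  have key : ∀ v : Fin 9 → Bool, (starRingEnd ℂ) (f v) * g v
      = ∑ j, ∑ k, (starRingEnd ℂ) (A j) * B k *
          (mu * ((((if wt (gL v) = wA j then 1 else 0) * (if wt (gR v) = wB k then 1 else 0) * (sL v * sR v) : ℤ)) : ℂ)) := by
    intro v
    rw [hf v, hg v, map_mul, map_sum, map_intCast]
    simp only [map_mul, apply_ite (starRingEnd ℂ), map_one, map_zero,
      Int.cast_mul, apply_ite (Int.cast : ℤ → ℂ), Int.cast_one, Int.cast_zero,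
      Finset.mul_sum, Finset.sum_mul]
    rw [Finset.sum_comm]
    apply Finset.sum_congr rfl; intro j _
    apply Finset.sum_congr rfl; intro k _
    ring
  rw [Finset.sum_congr rfl (fun v _ => key v)]
  rw [Finset.sum_comm]
  rw [Finset.mul_sum]
  apply Finset.sum_congr rfl; intro j _
  rw [Finset.sum_comm, Finset.mul_sum]
  apply Finset.sum_congr rfl; intro k _
  rw [← hM j k]
  push_cast
  rw [Finset.mul_sum, Finset.mul_sum]
  apply Finset.sum_congr rfl; intro v _
  ring

def klaux_MA : Fin 5 → Fin 5 → ℤ := ![![1,0,0,0,0],![8,28,0,0,0],![0,56,70,0,0],![0,0,56,28,0],![0,0,0,8,1]]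
def klaux_MA2 : Fin 5 → Fin 5 → ℤ := ![![-1,0,0,0,0],![8,-28,0,0,0],![0,56,-70,0,0],![0,0,56,-28,0],![0,0,0,8,-1]]
def klaux_MB : Fin 5 → Fin 5 → ℤ := ![![1,0,0,0,0],![4,4,0,0,0],![0,-4,-10,0,0],![0,0,-4,4,0],![0,0,0,4,1]]
def klaux_MB2 : Fin 5 → Fin 5 → ℤ := ![![-1,0,0,0,0],![4,-4,0,0,0],![0,-4,10,0,0],![0,0,-4,-4,0],![0,0,0,4,-1]]
def klaux_MC : Fin 5 → Fin 5 → ℤ := ![![1,0,0,0,0],![6,14,0,0,0],![0,14,0,0,0],![0,0,-14,-14,0],![0,0,0,-6,-1]]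
def klaux_MD : Fin 5 → Fin 5 → ℤ := ![![-1,0,0,0,0],![6,-14,0,0,0],![0,14,0,0,0],![0,0,-14,14,0],![0,0,0,-6,1]]
def klaux_MZ0 : Fin 5 → Fin 5 → ℤ := ![![1,0,0,0,0],![0,20,0,0,0],![0,0,14,0,0],![0,0,0,-28,0],![0,0,0,0,-7]]
def klaux_MZ1 : Fin 5 → Fin 5 → ℤ := ![![7,0,0,0,0],![0,28,0,0,0],![0,0,-14,0,0],![0,0,0,-20,0],![0,0,0,0,-1]]
def klaux_MT0 : Fin 5 → Fin 5 → ℤ := ![![1,0,0,0,0],![0,0,0,0,0],![0,0,-6,0,0],![0,0,0,8,0],![0,0,0,0,-3]]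
def klaux_MT1 : Fin 5 → Fin 5 → ℤ := ![![3,0,0,0,0],![0,-8,0,0,0],![0,0,6,0,0],![0,0,0,0,0],![0,0,0,0,-1]]

lemma klaux_zero (z : ℂ) (h : z.re^2 + z.im^2 = 0) : z = 0 := by
  apply Complex.ext <;> simp only [Complex.zero_re, Complex.zero_im] <;>
    nlinarith [sq_nonneg z.re, sq_nonneg z.im]

lemma klaux_core (x A2 A6 y : ℝ) (hx : 0 ≤ x) (h2 : 0 ≤ A2) (h6 : 0 ≤ A6) (hy : 0 ≤ y)
    (h8 : 0 ≤ 5*x + 5*A2 - 9*A6) (h0 : 0 ≤ 21*x + 15*A2 - 35*A6)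
    (e1 : 9*A2*A6 = 25*x^2 + 9*y)
    (e2 : 9*A2*(5*x+5*A2-9*A6) = 49*x*A6)
    (e3 : 1540*x^2 + 540*x*A2 + 225*A2^2 + 945*A6^2 = 1092*x*A6 + 1518*A2*A6) :
    x = 0 ∧ A2 = 0 ∧ A6 = 0 := by
  have key : x^3 + A2^3 + A6^3
      + (3407/315)*(x*A6*(21*x+15*A2-35*A6))
      + (705096646/18032175)*(A2*A6^2)
      + (206351/2003575)*(A2*(5*x+5*A2-9*A6)^2)
      + (946/9)*(A6^2*(5*x+5*A2-9*A6))
      + (4481858/148837)*(x*A2*(21*x+15*A2-35*A6))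
      + (470627779/9376731)*(x^2*(21*x+15*A2-35*A6))
      + (118990264/1202145)*((9*y)*A2)
      + (231740246/2232555)*((9*y)*x) = 0 := by
    linear_combination (-(x+A2+A6))*e3 + (6106223/1202145*A2 + 1034839654/46883655*x)*e2
      - (118990264/1202145*A2 + 231740246/2232555*x)*e1
  have n1 : 0 ≤ x*A6*(21*x+15*A2-35*A6) := mul_nonneg (mul_nonneg hx h6) h0
  have n2 : 0 ≤ A2*A6^2 := mul_nonneg h2 (sq_nonneg _)
  have n3 : 0 ≤ A2*(5*x+5*A2-9*A6)^2 := mul_nonneg h2 (sq_nonneg _)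
  have n4 : 0 ≤ A6^2*(5*x+5*A2-9*A6) := mul_nonneg (sq_nonneg _) h8
  have n5 : 0 ≤ x*A2*(21*x+15*A2-35*A6) := mul_nonneg (mul_nonneg hx h2) h0
  have n6 : 0 ≤ x^2*(21*x+15*A2-35*A6) := mul_nonneg (sq_nonneg _) h0
  have n7 : 0 ≤ (9*y)*A2 := mul_nonneg (by linarith) h2
  have n8 : 0 ≤ (9*y)*x := mul_nonneg (by linarith) hx
  have c2 : 0 ≤ x^3 := by positivity
  have c3 : 0 ≤ A2^3 := by positivity
  have c4 : 0 ≤ A6^3 := by positivity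
  have hx0 : x^3 = 0 := le_antisymm (by linarith) c2
  have hA20 : A2^3 = 0 := le_antisymm (by linarith) c3
  have hA60 : A6^3 = 0 := le_antisymm (by linarith) c4
  refine ⟨?_, ?_, ?_⟩
  · exact pow_eq_zero_iff (n := 3) (by norm_num) |>.mp hx0
  · exact pow_eq_zero_iff (n := 3) (by norm_num) |>.mp hA20
  · exact pow_eq_zero_iff (n := 3) (by norm_num) |>.mp hA60

/-- No 9-bit permutationally invariant code of the form
`c₀ = Σ_j a_{2j} W_{2j}`, `c₁ = Σ_j a_{8-2j} W_{2j+1}` can correct all one-bit errors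
together with all double errors `Z_r Z_s`: the Knill–Laflamme condition forces all
coefficients to vanish. -/
theorem stmt18 (a0 a2 a4 a6 a8 : ℂ) (c0 c1 : QVec 9)
    (hc0 : c0 = a0 • Wvec 9 0 + a2 • Wvec 9 2 + a4 • Wvec 9 4 + a6 • Wvec 9 6
      + a8 • Wvec 9 8)
    (hc1 : c1 = a8 • Wvec 9 1 + a6 • Wvec 9 3 + a4 • Wvec 9 5 + a2 • Wvec 9 7
      + a0 • Wvec 9 9)
    (h : Corrects errFamZZ9 ![c0, c1]) :
    a0 = 0 ∧ a2 = 0 ∧ a4 = 0 ∧ a6 = 0 ∧ a8 = 0 := by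
  obtain ⟨d, hd⟩ := h
  have pX : pauli (n := 9) 0 0 = PX 0 := rfl
  have pY : pauli (n := 9) 1 0 = PY 0 := rfl
  have pZ0 : pauli (n := 9) 2 0 = PZ 0 := rfl
  have pZ1 : pauli (n := 9) 2 1 = PZ 1 := rfl
  have expand0 : ∀ v, c0 v = ∑ j, (![a0,a2,a4,a6,a8]) j * (if wt v = (![0,2,4,6,8] : Fin 5 → ℕ) j then 1 else 0) := by
    intro v; simp [hc0, Wvec, Fin.sum_univ_five]; rfl
  have expand1 : ∀ v, c1 v = ∑ j, (![a8,a6,a4,a2,a0]) j * (if wt v = (![1,3,5,7,9] : Fin 5 → ℕ) j then 1 else 0) := by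
    intro v; simp [hc1, Wvec, Fin.sum_univ_five]; rfl
  have hmA := klaux_master c0 (PX 0 c1) ![a0,a2,a4,a6,a8] ![a8,a6,a4,a2,a0] ![0,2,4,6,8] ![1,3,5,7,9] (fun _ => (1:ℤ)) (fun _ => (1:ℤ)) (fun v => v) (bflip 0) 1 klaux_MA
    (by intro v; rw [expand0 v]; push_cast; ring)
    (by intro v; show c1 (bflip 0 v) = _; rw [expand1 (bflip 0 v)]; push_cast; ring)
    (by decide)
  have hzA : qinner c0 (PX 0 c1) = 0 := by
    have := hd (Sum.inl none) (Sum.inl (some (0, 0))) 0 1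
    simpa [errFamZZ9, pX, pY, pZ0, pZ1] using this
  rw [hzA] at hmA
  have hvA : (0:ℂ) = ∑ j, ∑ k, (starRingEnd ℂ) (![a0,a2,a4,a6,a8] j) * ![a8,a6,a4,a2,a0] k * ((klaux_MA j k : ℤ) : ℂ) := by
    rw [hmA]; ring
  simp only [Fin.sum_univ_five, klaux_MA, Matrix.cons_val] at hvA
  norm_num [Matrix.cons_val_zero, Matrix.cons_val_one, Matrix.head_cons, Matrix.vecHead, Matrix.vecTail, Function.comp_apply] at hvA
  have hmA2 := klaux_master c0 (PY 0 c1) ![a0,a2,a4,a6,a8] ![a8,a6,a4,a2,a0] ![0,2,4,6,8] ![1,3,5,7,9] (fun _ => (1:ℤ)) (fun v => if v 0 then (1:ℤ) else -1) (fun v => v) (bflip 0) Complex.I klaux_MA2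
    (by intro v; rw [expand0 v]; push_cast; ring)
    (by intro v; show Complex.I * (if v 0 then (1:ℂ) else -1) * c1 (bflip 0 v) = _; rw [expand1 (bflip 0 v)]; by_cases h1 : v 0 <;> simp [h1] <;> push_cast <;> ring)
    (by decide)
  have hzA2 : qinner c0 (PY 0 c1) = 0 := by
    have := hd (Sum.inl none) (Sum.inl (some (1, 0))) 0 1
    simpa [errFamZZ9, pX, pY, pZ0, pZ1] using this
  rw [hzA2] at hmA2
  have hvA2 : (0:ℂ) = ∑ j, ∑ k, (starRingEnd ℂ) (![a0,a2,a4,a6,a8] j) * ![a8,a6,a4,a2,a0] k * ((klaux_MA2 j k : ℤ) : ℂ) := by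
    rcases mul_eq_zero.mp hmA2.symm with hh | hh
    · exact absurd hh Complex.I_ne_zero
    · exact hh.symm
  simp only [Fin.sum_univ_five, klaux_MA2, Matrix.cons_val] at hvA2
  norm_num [Matrix.cons_val_zero, Matrix.cons_val_one, Matrix.head_cons, Matrix.vecHead, Matrix.vecTail, Function.comp_apply] at hvA2
  have hmB := klaux_master (PX 0 c0) (PZ 1 (PZ 2 c1)) ![a0,a2,a4,a6,a8] ![a8,a6,a4,a2,a0] ![0,2,4,6,8] ![1,3,5,7,9] (fun _ => (1:ℤ)) (fun v => (if v 1 then (-1:ℤ) else 1) * (if v 2 then (-1:ℤ) else 1)) (bflip 0) (fun v => v) 1 klaux_MB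
    (by intro v; show c0 (bflip 0 v) = _; rw [expand0 (bflip 0 v)]; push_cast; ring)
    (by intro v; show (if v 1 then (-1:ℂ) else 1) * ((if v 2 then (-1:ℂ) else 1) * c1 v) = _; rw [expand1 v]; by_cases h1 : v 1 <;> by_cases h2 : v 2 <;> simp [h1, h2] <;> push_cast <;> ring)
    (by decide)
  have hzB : qinner (PX 0 c0) (PZ 1 (PZ 2 c1)) = 0 := by
    have := hd (Sum.inl (some (0, 0))) (Sum.inr ⟨(1, 2), by decide⟩) 0 1
    simpa [errFamZZ9, pX, pY, pZ0, pZ1] using this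
  rw [hzB] at hmB
  have hvB : (0:ℂ) = ∑ j, ∑ k, (starRingEnd ℂ) (![a0,a2,a4,a6,a8] j) * ![a8,a6,a4,a2,a0] k * ((klaux_MB j k : ℤ) : ℂ) := by
    rw [hmB]; ring
  simp only [Fin.sum_univ_five, klaux_MB, Matrix.cons_val] at hvB
  norm_num [Matrix.cons_val_zero, Matrix.cons_val_one, Matrix.head_cons, Matrix.vecHead, Matrix.vecTail, Function.comp_apply] at hvB
  have hmB2 := klaux_master (PZ 1 (PZ 2 c0)) (PY 0 c1) ![a0,a2,a4,a6,a8] ![a8,a6,a4,a2,a0] ![0,2,4,6,8] ![1,3,5,7,9] (fun v => (if v 1 then (-1:ℤ) else 1) * (if v 2 then (-1:ℤ) else 1)) (fun v => if v 0 then (1:ℤ) else -1) (fun v => v) (bflip 0) Complex.I klaux_MB2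
    (by intro v; show (if v 1 then (-1:ℂ) else 1) * ((if v 2 then (-1:ℂ) else 1) * c0 v) = _; rw [expand0 v]; by_cases h1 : v 1 <;> by_cases h2 : v 2 <;> simp [h1, h2] <;> push_cast <;> ring)
    (by intro v; show Complex.I * (if v 0 then (1:ℂ) else -1) * c1 (bflip 0 v) = _; rw [expand1 (bflip 0 v)]; by_cases h1 : v 0 <;> simp [h1] <;> push_cast <;> ring)
    (by decide)
  have hzB2 : qinner (PZ 1 (PZ 2 c0)) (PY 0 c1) = 0 := by
    have := hd (Sum.inr ⟨(1, 2), by decide⟩) (Sum.inl (some (1, 0))) 0 1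
    simpa [errFamZZ9, pX, pY, pZ0, pZ1] using this
  rw [hzB2] at hmB2
  have hvB2 : (0:ℂ) = ∑ j, ∑ k, (starRingEnd ℂ) (![a0,a2,a4,a6,a8] j) * ![a8,a6,a4,a2,a0] k * ((klaux_MB2 j k : ℤ) : ℂ) := by
    rcases mul_eq_zero.mp hmB2.symm with hh | hh
    · exact absurd hh Complex.I_ne_zero
    · exact hh.symm
  simp only [Fin.sum_univ_five, klaux_MB2, Matrix.cons_val] at hvB2
  norm_num [Matrix.cons_val_zero, Matrix.cons_val_one, Matrix.head_cons, Matrix.vecHead, Matrix.vecTail, Function.comp_apply] at hvB2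
  have hmC := klaux_master (PZ 1 c0) (PX 0 c1) ![a0,a2,a4,a6,a8] ![a8,a6,a4,a2,a0] ![0,2,4,6,8] ![1,3,5,7,9] (fun v => if v 1 then (-1:ℤ) else 1) (fun _ => (1:ℤ)) (fun v => v) (bflip 0) 1 klaux_MC
    (by intro v; show (if v 1 then (-1:ℂ) else 1) * c0 v = _; rw [expand0 v]; by_cases h1 : v 1 <;> simp [h1] <;> push_cast <;> ring)
    (by intro v; show c1 (bflip 0 v) = _; rw [expand1 (bflip 0 v)]; push_cast; ring)
    (by decide)
  have hzC : qinner (PZ 1 c0) (PX 0 c1) = 0 := by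
    have := hd (Sum.inl (some (2, 1))) (Sum.inl (some (0, 0))) 0 1
    simpa [errFamZZ9, pX, pY, pZ0, pZ1] using this
  rw [hzC] at hmC
  have hvC : (0:ℂ) = ∑ j, ∑ k, (starRingEnd ℂ) (![a0,a2,a4,a6,a8] j) * ![a8,a6,a4,a2,a0] k * ((klaux_MC j k : ℤ) : ℂ) := by
    rw [hmC]; ring
  simp only [Fin.sum_univ_five, klaux_MC, Matrix.cons_val] at hvC
  norm_num [Matrix.cons_val_zero, Matrix.cons_val_one, Matrix.head_cons, Matrix.vecHead, Matrix.vecTail, Function.comp_apply] at hvC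
  have hmD := klaux_master (PX 0 c0) (PZ 0 (PZ 1 c1)) ![a0,a2,a4,a6,a8] ![a8,a6,a4,a2,a0] ![0,2,4,6,8] ![1,3,5,7,9] (fun _ => (1:ℤ)) (fun v => (if v 0 then (-1:ℤ) else 1) * (if v 1 then (-1:ℤ) else 1)) (bflip 0) (fun v => v) 1 klaux_MD
    (by intro v; show c0 (bflip 0 v) = _; rw [expand0 (bflip 0 v)]; push_cast; ring)
    (by intro v; show (if v 0 then (-1:ℂ) else 1) * ((if v 1 then (-1:ℂ) else 1) * c1 v) = _; rw [expand1 v]; by_cases h1 : v 0 <;> by_cases h2 : v 1 <;> simp [h1, h2] <;> push_cast <;> ring)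
    (by decide)
  have hzD : qinner (PX 0 c0) (PZ 0 (PZ 1 c1)) = 0 := by
    have := hd (Sum.inl (some (0, 0))) (Sum.inr ⟨(0, 1), by decide⟩) 0 1
    simpa [errFamZZ9, pX, pY, pZ0, pZ1] using this
  rw [hzD] at hmD
  have hvD : (0:ℂ) = ∑ j, ∑ k, (starRingEnd ℂ) (![a0,a2,a4,a6,a8] j) * ![a8,a6,a4,a2,a0] k * ((klaux_MD j k : ℤ) : ℂ) := by
    rw [hmD]; ring
  simp only [Fin.sum_univ_five, klaux_MD, Matrix.cons_val] at hvD
  norm_num [Matrix.cons_val_zero, Matrix.cons_val_one, Matrix.head_cons, Matrix.vecHead, Matrix.vecTail, Function.comp_apply] at hvD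
  have hmZ0 := klaux_master c0 (PZ 0 c0) ![a0,a2,a4,a6,a8] ![a0,a2,a4,a6,a8] ![0,2,4,6,8] ![0,2,4,6,8] (fun _ => (1:ℤ)) (fun v => if v 0 then (-1:ℤ) else 1) (fun v => v) (fun v => v) 1 klaux_MZ0
    (by intro v; rw [expand0 v]; push_cast; ring)
    (by intro v; show (if v 0 then (-1:ℂ) else 1) * c0 v = _; rw [expand0 v]; by_cases h1 : v 0 <;> simp [h1] <;> push_cast <;> ring)
    (by decide)
  have hmZ1 := klaux_master c1 (PZ 0 c1) ![a8,a6,a4,a2,a0] ![a8,a6,a4,a2,a0] ![1,3,5,7,9] ![1,3,5,7,9] (fun _ => (1:ℤ)) (fun v => if v 0 then (-1:ℤ) else 1) (fun v => v) (fun v => v) 1 klaux_MZ1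
    (by intro v; rw [expand1 v]; push_cast; ring)
    (by intro v; show (if v 0 then (-1:ℂ) else 1) * c1 v = _; rw [expand1 v]; by_cases h1 : v 0 <;> simp [h1] <;> push_cast <;> ring)
    (by decide)
  have hdZ0 := hd (Sum.inl none) (Sum.inl (some (2, 0))) 0 0
  have hdZ1 := hd (Sum.inl none) (Sum.inl (some (2, 0))) 1 1
  simp only [errFamZZ9, pZ0, Matrix.cons_val_zero, Matrix.cons_val_one, Matrix.head_cons] at hdZ0 hdZ1
  norm_num at hdZ0 hdZ1
  have hvZ : (∑ j, ∑ k, (starRingEnd ℂ) (![a0,a2,a4,a6,a8] j) * ![a0,a2,a4,a6,a8] k * ((klaux_MZ0 j k : ℤ) : ℂ))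
      = ∑ j, ∑ k, (starRingEnd ℂ) (![a8,a6,a4,a2,a0] j) * ![a8,a6,a4,a2,a0] k * ((klaux_MZ1 j k : ℤ) : ℂ) := by
    rw [hmZ0] at hdZ0
    rw [hmZ1] at hdZ1
    linear_combination hdZ0 - hdZ1
  simp only [Fin.sum_univ_five, klaux_MZ0, klaux_MZ1, Matrix.cons_val] at hvZ
  norm_num [Matrix.cons_val_zero, Matrix.cons_val_one, Matrix.head_cons, Matrix.vecHead, Matrix.vecTail, Function.comp_apply] at hvZ
  have hmT0 := klaux_master (PZ 0 c0) (PZ 1 (PZ 2 c0)) ![a0,a2,a4,a6,a8] ![a0,a2,a4,a6,a8] ![0,2,4,6,8] ![0,2,4,6,8] (fun v => if v 0 then (-1:ℤ) else 1) (fun v => (if v 1 then (-1:ℤ) else 1) * (if v 2 then (-1:ℤ) else 1)) (fun v => v) (fun v => v) 1 klaux_MT0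
    (by intro v; show (if v 0 then (-1:ℂ) else 1) * c0 v = _; rw [expand0 v]; by_cases h1 : v 0 <;> simp [h1] <;> push_cast <;> ring)
    (by intro v; show (if v 1 then (-1:ℂ) else 1) * ((if v 2 then (-1:ℂ) else 1) * c0 v) = _; rw [expand0 v]; by_cases h1 : v 1 <;> by_cases h2 : v 2 <;> simp [h1, h2] <;> push_cast <;> ring)
    (by decide)
  have hmT1 := klaux_master (PZ 0 c1) (PZ 1 (PZ 2 c1)) ![a8,a6,a4,a2,a0] ![a8,a6,a4,a2,a0] ![1,3,5,7,9] ![1,3,5,7,9] (fun v => if v 0 then (-1:ℤ) else 1) (fun v => (if v 1 then (-1:ℤ) else 1) * (if v 2 then (-1:ℤ) else 1)) (fun v => v) (fun v => v) 1 klaux_MT1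
    (by intro v; show (if v 0 then (-1:ℂ) else 1) * c1 v = _; rw [expand1 v]; by_cases h1 : v 0 <;> simp [h1] <;> push_cast <;> ring)
    (by intro v; show (if v 1 then (-1:ℂ) else 1) * ((if v 2 then (-1:ℂ) else 1) * c1 v) = _; rw [expand1 v]; by_cases h1 : v 1 <;> by_cases h2 : v 2 <;> simp [h1, h2] <;> push_cast <;> ring)
    (by decide)
  have hdT0 := hd (Sum.inl (some (2, 0))) (Sum.inr ⟨(1, 2), by decide⟩) 0 0
  have hdT1 := hd (Sum.inl (some (2, 0))) (Sum.inr ⟨(1, 2), by decide⟩) 1 1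
  simp only [errFamZZ9, pZ0, Matrix.cons_val_zero, Matrix.cons_val_one, Matrix.head_cons] at hdT0 hdT1
  norm_num at hdT0 hdT1
  have hvT : (∑ j, ∑ k, (starRingEnd ℂ) (![a0,a2,a4,a6,a8] j) * ![a0,a2,a4,a6,a8] k * ((klaux_MT0 j k : ℤ) : ℂ))
      = ∑ j, ∑ k, (starRingEnd ℂ) (![a8,a6,a4,a2,a0] j) * ![a8,a6,a4,a2,a0] k * ((klaux_MT1 j k : ℤ) : ℂ) := by
    rw [hmT0] at hdT0
    rw [hmT1] at hdT1
    linear_combination hdT0 - hdT1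
  simp only [Fin.sum_univ_five, klaux_MT0, klaux_MT1, Matrix.cons_val] at hvT
  norm_num [Matrix.cons_val_zero, Matrix.cons_val_one, Matrix.head_cons, Matrix.vecHead, Matrix.vecTail, Function.comp_apply] at hvT
  have reA := congrArg Complex.re hvA
  simp only [Complex.add_re, Complex.sub_re, Complex.neg_re, Complex.mul_re, Complex.mul_im,
    Complex.add_im, Complex.sub_im, Complex.neg_im, Complex.conj_re, Complex.conj_im,
    Complex.re_ofNat, Complex.im_ofNat, Complex.one_re, Complex.one_im, Complex.zero_re, Complex.zero_im] at reA
  have reA2 := congrArg Complex.re hvA2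
  simp only [Complex.add_re, Complex.sub_re, Complex.neg_re, Complex.mul_re, Complex.mul_im,
    Complex.add_im, Complex.sub_im, Complex.neg_im, Complex.conj_re, Complex.conj_im,
    Complex.re_ofNat, Complex.im_ofNat, Complex.one_re, Complex.one_im, Complex.zero_re, Complex.zero_im] at reA2
  have reB := congrArg Complex.re hvB
  simp only [Complex.add_re, Complex.sub_re, Complex.neg_re, Complex.mul_re, Complex.mul_im,
    Complex.add_im, Complex.sub_im, Complex.neg_im, Complex.conj_re, Complex.conj_im,
    Complex.re_ofNat, Complex.im_ofNat, Complex.one_re, Complex.one_im, Complex.zero_re, Complex.zero_im] at reB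
  have reB2 := congrArg Complex.re hvB2
  simp only [Complex.add_re, Complex.sub_re, Complex.neg_re, Complex.mul_re, Complex.mul_im,
    Complex.add_im, Complex.sub_im, Complex.neg_im, Complex.conj_re, Complex.conj_im,
    Complex.re_ofNat, Complex.im_ofNat, Complex.one_re, Complex.one_im, Complex.zero_re, Complex.zero_im] at reB2
  have imC := congrArg Complex.im hvC
  simp only [Complex.add_re, Complex.sub_re, Complex.neg_re, Complex.mul_re, Complex.mul_im,
    Complex.add_im, Complex.sub_im, Complex.neg_im, Complex.conj_re, Complex.conj_im,
    Complex.re_ofNat, Complex.im_ofNat, Complex.one_re, Complex.one_im, Complex.zero_re, Complex.zero_im] at imC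
  have imD := congrArg Complex.im hvD
  simp only [Complex.add_re, Complex.sub_re, Complex.neg_re, Complex.mul_re, Complex.mul_im,
    Complex.add_im, Complex.sub_im, Complex.neg_im, Complex.conj_re, Complex.conj_im,
    Complex.re_ofNat, Complex.im_ofNat, Complex.one_re, Complex.one_im, Complex.zero_re, Complex.zero_im] at imD
  have reZ := congrArg Complex.re hvZ
  simp only [Complex.add_re, Complex.sub_re, Complex.neg_re, Complex.mul_re, Complex.mul_im,
    Complex.add_im, Complex.sub_im, Complex.neg_im, Complex.conj_re, Complex.conj_im,
    Complex.re_ofNat, Complex.im_ofNat, Complex.one_re, Complex.one_im, Complex.zero_re, Complex.zero_im] at reZ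
  have reT := congrArg Complex.re hvT
  simp only [Complex.add_re, Complex.sub_re, Complex.neg_re, Complex.mul_re, Complex.mul_im,
    Complex.add_im, Complex.sub_im, Complex.neg_im, Complex.conj_re, Complex.conj_im,
    Complex.re_ofNat, Complex.im_ofNat, Complex.one_re, Complex.one_im, Complex.zero_re, Complex.zero_im] at reT
  have h28 : (a2.re*a8.re + a2.im*a8.im) = 0 := by linarith [reA, reA2, reB, reB2]
  have h46 : (a4.re*a6.re + a4.im*a6.im) = 0 := by linarith [reA, reA2, reB, reB2]
  have hr26 : 3*(a2.re*a6.re + a2.im*a6.im) + 5*(a4.re^2 + a4.im^2) = 0 := by linarith [reA, reA2, reB, reB2]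
  have hr08 : 3*(a0.re*a8.re + a0.im*a8.im) - 35*(a4.re^2 + a4.im^2) = 0 := by linarith [reA, reA2, reB, reB2]
  have hI : 3*(a2.re*a8.im - a2.im*a8.re) + 7*(a4.re*a6.im - a4.im*a6.re) = 0 := by linarith [imC, imD]
  have hi08 : (a0.re*a8.im - a0.im*a8.re) + 14*(a2.re*a6.im - a2.im*a6.re) = 0 := by linarith [imC, imD]
  have hA8lin : (a8.re^2 + a8.im^2) = 5*(a4.re^2 + a4.im^2) + 5*(a2.re^2 + a2.im^2) - 9*(a6.re^2 + a6.im^2) := by linarith [reZ, reT]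
  have hA0lin : (a0.re^2 + a0.im^2) = 21*(a4.re^2 + a4.im^2) + 15*(a2.re^2 + a2.im^2) - 35*(a6.re^2 + a6.im^2) := by linarith [reZ, reT]
  have he1 : 9*(a2.re^2 + a2.im^2)*(a6.re^2 + a6.im^2) = 25*(a4.re^2 + a4.im^2)^2 + 9*(a2.re*a6.im - a2.im*a6.re)^2 := by
    linear_combination (3*(a2.re*a6.re + a2.im*a6.im) - 5*(a4.re^2 + a4.im^2))*hr26
  have he2 : 9*(a2.re^2 + a2.im^2)*(5*(a4.re^2 + a4.im^2)+5*(a2.re^2 + a2.im^2)-9*(a6.re^2 + a6.im^2)) = 49*(a4.re^2 + a4.im^2)*(a6.re^2 + a6.im^2) := by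
    linear_combination (-9*(a2.re^2 + a2.im^2))*hA8lin + 9*(a2.re*a8.re + a2.im*a8.im)*h28 - 49*(a4.re*a6.re + a4.im*a6.im)*h46 + (3*(a2.re*a8.im - a2.im*a8.re) - 7*(a4.re*a6.im - a4.im*a6.re))*hI
  have he3 : 1540*(a4.re^2 + a4.im^2)^2 + 540*(a4.re^2 + a4.im^2)*(a2.re^2 + a2.im^2) + 225*(a2.re^2 + a2.im^2)^2 + 945*(a6.re^2 + a6.im^2)^2 = 1092*(a4.re^2 + a4.im^2)*(a6.re^2 + a6.im^2) + 1518*(a2.re^2 + a2.im^2)*(a6.re^2 + a6.im^2) := by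
    linear_combination (1/3)*((3*(a0.re*a8.re + a0.im*a8.im)+35*(a4.re^2 + a4.im^2))*hr08 + 9*((a0.re*a8.im - a0.im*a8.re)-14*(a2.re*a6.im - a2.im*a6.re))*hi08 - 196*he1 - 9*(a0.re^2 + a0.im^2)*hA8lin - 9*(5*(a4.re^2 + a4.im^2)+5*(a2.re^2 + a2.im^2)-9*(a6.re^2 + a6.im^2))*hA0lin)
  have nn8 : (0:ℝ) ≤ (a8.re^2 + a8.im^2) := by positivity
  have nn0 : (0:ℝ) ≤ (a0.re^2 + a0.im^2) := by positivity
  obtain ⟨hx0, h20, h60⟩ := klaux_core (a4.re^2 + a4.im^2) (a2.re^2 + a2.im^2) (a6.re^2 + a6.im^2) ((a2.re*a6.im - a2.im*a6.re)^2)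
    (by positivity) (by positivity) (by positivity) (by positivity)
    (by linarith) (by linarith) he1 he2 he3
  have h80 : (a8.re^2 + a8.im^2) = 0 := by linarith
  have h00 : (a0.re^2 + a0.im^2) = 0 := by linarith
  exact ⟨klaux_zero _ h00, klaux_zero _ h20, klaux_zero _ hx0, klaux_zero _ h60, klaux_zero _ h80⟩
end
end

section
/- The only complex numbers a_0, a_2, a_4, a_6, a_8 satisfying the following eight equations are a_0 = a_2 = a_4 = a_6 = a_8 = 0: (1) ā_2 a_8 + 7 ā_4 a_6 + 7 ā_6 a_4 + ā_8 a_2 = 0; (2) 5 ā_2 a_8 + 7 ā_4 a_6 − 21 ā_6 a_4 − 7 ā_8 a_2 = 0; (3) 2 ā_2 a_8 − 7 ā_4 a_6 + 5 ā_8 a_2 = 0; (4) ā_0 a_8 + 28 ā_2 a_6 + 70|a_4|^2 + 28 ā_6 a_2 + ā_8 a_0 = 0; (5) 9 ā_0 a_8 + 140 ā_2 a_6 + 70|a_4|^2 − 84 ā_6 a_2 − 7 ā_8 a_0 = 0; (6) 9 ā_0 a_8 + 56 ā_2 a_6 − 70|a_4|^2 + 5 ā_8 a_0 = 0; (7) |a_0|^2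 + 20|a_2|^2 + 14|a_4|^2 − 28|a_6|^2 − 7|a_8|^2 = 0; (8) 9|a_0|^2 + 40|a_2|^2 − 14|a_4|^2 − 35|a_8|^2 = 0. (These are the conditions for a 9-bit permutationally invariant code to correct all single and double Z errors and all single X errors, dropping only one Y-related condition; hence even this weaker set of requirements has no solution.) -/
open ComplexConjugate

lemma realpart19 (A B C D E q1 q2 : ℝ)
    (hA : 0 ≤ A) (hB : 0 ≤ B) (hC : 0 ≤ C) (hD : 0 ≤ D) (hE : 0 ≤ E)
    (f1 : 3*q1 + 5*C = 0)
    (f2 : q1^2 + q2^2 = B*D)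
    (f3 : 49*q1^2 + 196*q2^2 = A*E)
    (f4 : 49*(C*D) = 9*(B*E))
    (f5 : A + 20*B + 14*C - 28*D - 7*E = 0)
    (f6 : 9*A + 40*B - 14*C - 35*E = 0) :
    A = 0 ∧ B = 0 ∧ C = 0 ∧ D = 0 ∧ E = 0 := by
  have fE : E = 5*B + 5*C - 9*D := by linarith
  have fA : A = 15*B + 21*C - 35*D := by linarith
  have hEid : E*(81*B+49*C) = 245*C*(B+C) := by linear_combination (-9)*f4 + 49*C*fE
  have hDid : D*(81*B+49*C) = 45*B*(B+C) := by linear_combination f4 + 9*B*fE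
  have hq1sq : 9*q1^2 = 25*C^2 := by linear_combination (3*q1 - 5*C)*f1
  have h9AE : 9*(A*E) = 1225*C^2 + 1764*q2^2 := by
    linear_combination (-9)*f3 + 49*hq1sq
  have hC0 : C = 0 := by
    by_contra hne
    have hCpos : 0 < C := lt_of_le_of_ne hC (Ne.symm hne)
    have h81 : (0:ℝ) < 81*B + 49*C := by linarith
    have k0 : 1225*C^2 ≤ 9*(A*E) := by nlinarith [sq_nonneg q2]
    have k1 : 1225*C^2*(81*B+49*C) ≤ 9*(A*E)*(81*B+49*C) :=
      mul_le_mul_of_nonneg_right k0 h81.le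
    have e2 : 9*(A*E)*(81*B+49*C) = 2205*(A*C)*(B+C) := by
      linear_combination 9*A*hEid
    have k2 : 1225*C^2*(81*B+49*C) ≤ 2205*(A*C)*(B+C) := by linarith
    have k4 : 1225*C^2*(81*B+49*C)*(81*B+49*C) ≤ 2205*(A*C)*(B+C)*(81*B+49*C) :=
      mul_le_mul_of_nonneg_right k2 h81.le
    have e4 : 2205*(A*C)*(B+C)*(81*B+49*C)
        = 2205*C*(B+C)*((15*B+21*C)*(81*B+49*C) - 35*(45*B*(B+C))) := by
      linear_combination 2205*C*(B+C)*(81*B+49*C)*fA - 77175*C*(B+C)*hDid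
    have e5 : 1225*C^2*(81*B+49*C)*(81*B+49*C)
        - 2205*C*(B+C)*((15*B+21*C)*(81*B+49*C) - 35*(45*B*(B+C)))
        = 793800*C*B^3 + 6932520*B^2*C^2 + 5556600*B*C^3 + 672280*C^4 := by ring
    have t1 : 0 ≤ C*B^3 := by positivity
    have t2 : 0 ≤ B^2*C^2 := by positivity
    have t3 : 0 ≤ B*C^3 := by positivity
    have t4 : 0 < C^4 := by positivity
    linarith
  subst hC0
  have hq10 : q1 = 0 := by linarith
  have hBE : B*E = 0 := by linarith
  have hB0 : B = 0 := by
    by_contra hne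
    have hBpos : 0 < B := lt_of_le_of_ne hB (Ne.symm hne)
    have hE0 : E = 0 := by
      rcases mul_eq_zero.mp hBE with h | h
      · exact absurd h hBpos.ne'
      · exact h
    have hD5 : 9*D = 5*B := by linarith
    nlinarith [sq_nonneg q2, mul_pos hBpos hBpos]
  subst hB0
  have hD0 : D = 0 := by linarith
  have hE0 : E = 0 := by linarith
  have hA0 : A = 0 := by linarith
  exact ⟨hA0, rfl, rfl, hD0, hE0⟩

/-- The eight conditions for a 9-bit permutationally invariant code to correct all
single and double `Z` errors and all single `X` errors (dropping only one `Y`-related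
condition) force all coefficients to vanish. -/
theorem stmt19 (a0 a2 a4 a6 a8 : ℂ)
    (h1 : conj a2 * a8 + 7 * conj a4 * a6 + 7 * conj a6 * a4 + conj a8 * a2 = 0)
    (h2 : 5 * conj a2 * a8 + 7 * conj a4 * a6 - 21 * conj a6 * a4 - 7 * conj a8 * a2 = 0)
    (h3 : 2 * conj a2 * a8 - 7 * conj a4 * a6 + 5 * conj a8 * a2 = 0)
    (h4 : conj a0 * a8 + 28 * conj a2 * a6 + 70 * (‖a4‖ : ℂ) ^ 2
      + 28 * conj a6 * a2 + conj a8 * a0 = 0)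
    (h5 : 9 * conj a0 * a8 + 140 * conj a2 * a6 + 70 * (‖a4‖ : ℂ) ^ 2
      - 84 * conj a6 * a2 - 7 * conj a8 * a0 = 0)
    (h6 : 9 * conj a0 * a8 + 56 * conj a2 * a6 - 70 * (‖a4‖ : ℂ) ^ 2
      + 5 * conj a8 * a0 = 0)
    (h7 : (‖a0‖ : ℂ) ^ 2 + 20 * (‖a2‖ : ℂ) ^ 2
      + 14 * (‖a4‖ : ℂ) ^ 2 - 28 * (‖a6‖ : ℂ) ^ 2
      - 7 * (‖a8‖ : ℂ) ^ 2 = 0)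
    (h8 : 9 * (‖a0‖ : ℂ) ^ 2 + 40 * (‖a2‖ : ℂ) ^ 2
      - 14 * (‖a4‖ : ℂ) ^ 2 - 35 * (‖a8‖ : ℂ) ^ 2 = 0) :
    a0 = 0 ∧ a2 = 0 ∧ a4 = 0 ∧ a6 = 0 ∧ a8 = 0 := by
  -- complex-linear consequences of h1–h6
  have hx : conj a2 * a8 + conj a8 * a2 = 0 := by
    linear_combination (3*h1 + h2 + 4*h3)/16
  have hy : (7:ℂ) * (conj a4 * a6) = -(3 * (conj a2 * a8)) := by
    linear_combination 5*hx - h3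
  have hr : conj a6 * a2 = conj (conj a2 * a6) := by
    rw [map_mul, Complex.conj_conj]; ring
  have hp : 2 * (conj a0 * a8) + 21 * (conj a2 * a6) - 7 * conj (conj a2 * a6) = 0 := by
    rw [← hr]; linear_combination (h4 + 3*h5 + 4*h6)/32
  have hm : 21 * (conj a2 * a6) + 21 * conj (conj a2 * a6)
      + 70 * (‖a4‖ : ℂ) ^ 2 = 0 := by
    rw [← hr]; linear_combination (27*h4 + h5 - 4*h6)/32
  -- real-part extraction
  have hq1 : 3 * (conj a2 * a6).re + 5 * Complex.normSq a4 = 0 := by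
    have h := congrArg Complex.re hm
    simp [← Complex.ofReal_pow, Complex.sq_norm] at h
    simp [Complex.mul_re, Complex.conj_re, Complex.conj_im]
    linarith
  have hpre : (conj a0 * a8).re = -7 * (conj a2 * a6).re := by
    have h := congrArg Complex.re hp
    simp at h
    simp [Complex.mul_re, Complex.conj_re, Complex.conj_im]
    linarith
  have hpim : (conj a0 * a8).im = -14 * (conj a2 * a6).im := by
    have h := congrArg Complex.im hp
    simp at h
    simp [Complex.mul_im, Complex.conj_re, Complex.conj_im]
    linarith
  have hBD : (conj a2 * a6).re ^ 2 + (conj a2 * a6).im ^ 2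
      = Complex.normSq a2 * Complex.normSq a6 := by
    have h : Complex.normSq (conj a2 * a6) = Complex.normSq a2 * Complex.normSq a6 := by
      simp [Complex.normSq_mul]
    rw [← h, Complex.normSq_apply]; ring
  have hAE : 49 * (conj a2 * a6).re ^ 2 + 196 * (conj a2 * a6).im ^ 2
      = Complex.normSq a0 * Complex.normSq a8 := by
    have h : Complex.normSq (conj a0 * a8) = Complex.normSq a0 * Complex.normSq a8 := by
      simp [Complex.normSq_mul]
    rw [← h, Complex.normSq_apply, hpre, hpim]; ring
  have hCD : 49 * (Complex.normSq a4 * Complex.normSq a6)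
      = 9 * (Complex.normSq a2 * Complex.normSq a8) := by
    have h := congrArg Complex.normSq hy
    simp [Complex.normSq_mul] at h
    nlinarith [h]
  have h7r : Complex.normSq a0 + 20 * Complex.normSq a2 + 14 * Complex.normSq a4
      - 28 * Complex.normSq a6 - 7 * Complex.normSq a8 = 0 := by
    have h := congrArg Complex.re h7
    simp [← Complex.ofReal_pow, Complex.sq_norm] at h
    linarith
  have h8r : 9 * Complex.normSq a0 + 40 * Complex.normSq a2 - 14 * Complex.normSq a4
      - 35 * Complex.normSq a8 = 0 := by
    have h := congrArg Complex.re h8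
    simp [← Complex.ofReal_pow, Complex.sq_norm] at h
    linarith
  -- apply the real lemma
  obtain ⟨hA0, hB0, hC0, hD0, hE0⟩ :=
    realpart19 (Complex.normSq a0) (Complex.normSq a2) (Complex.normSq a4)
      (Complex.normSq a6) (Complex.normSq a8) (conj a2 * a6).re (conj a2 * a6).im
      (Complex.normSq_nonneg a0) (Complex.normSq_nonneg a2) (Complex.normSq_nonneg a4)
      (Complex.normSq_nonneg a6) (Complex.normSq_nonneg a8)
      (by linarith) hBD hAE hCD (by linarith) (by linarith)
  exact ⟨Complex.normSq_eq_zero.mp hA0, Complex.normSq_eq_zero.mp hB0,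
    Complex.normSq_eq_zero.mp hC0, Complex.normSq_eq_zero.mp hD0,
    Complex.normSq_eq_zero.mp hE0⟩
end
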